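/- arXiv:1706.05404 — 4 statements merged into one kernel-verified Lean document; each statement's English description precedes it below -/
import Mathlib

section
/- Let $(M_n)_{n\in\mathbb{N}}$ be a discrete-time martingale with $\sup_{i\geq 1}\mathbb{E}[|M_i-M_{i-1}|]<\infty$, and let $(\tau_k)_{k\geq 1}$ be an increasing sequence of random times independent of $M$ with counting process $A_t:=\sum_{k\geq 1}\mathbf{1}_{\{\tau_k\leq t\}}$ satisfying $\mathbb{E}[A_t]<\infty$ for all $t$. Then the process $Z_t := M_0+\sum_{k=1}^{\infty}(M_k-M_{k-1})\mathbf{1}_{\{\tau_k\leq t\}} = M_{A_t}$ is a martingale with respect to its natural filtration. -/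
open MeasureTheory ProbabilityTheory Real
open scoped NNReal ENNReal

/-!
Where `A_t` is finite, `M_{A_t} = M_0 + ∑_k (M_{k+1} - M_k) 1{τ_{k+1} ≤ t}`, so `Z_t - Z_s` collects
the increments `M_{k+1} - M_k` with `s < τ_{k+1} ≤ t`. On the event `{τ_{k+1} > s}` every `Z_u`,
`u ≤ s`, equals `M_{min(A_u, k)}`, so the trace of `σ(Z_u, u ≤ s)` on it is contained in
`σ(τ, M_0, …, M_k)`. Since `τ` is independent of `M`, freezing `τ` and applying the martingale
property of `M` at time `k` shows that `M_{k+1} - M_k` integrates to zero over every set of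
`σ(τ, M_0, …, M_k)`. By independence again, `E ∑_k |M_{k+1} - M_k| 1{τ_{k+1} ≤ t} ≤ C E[A_t] < ∞`,
which makes `Z_t` integrable and justifies integrating the series term by term.
-/

section Counting

variable {p : ℕ → Prop} [DecidablePred p] {N : ℕ}

lemma Nat.exists_le_forall_iff_lt_of_not (hp : Antitone p) {k : ℕ} (hk : ¬ p k) :
    ∃ N ≤ k, ∀ j, p j ↔ j < N := by
  have hex : ∃ n, ¬ p n := ⟨k, hk⟩
  refine ⟨Nat.find hex, Nat.find_min' hex hk, fun j => ⟨fun hj => ?_, fun hj => ?_⟩⟩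
  · by_contra! hle
    exact Nat.find_spec hex (hp hle hj)
  · exact not_not.1 (Nat.find_min hex hj)

lemma exists_not_of_tsum_ite_ne_top (h : ∑' k, (if p k then (1 : ℝ≥0∞) else 0) ≠ ⊤) :
    ∃ k, ¬ p k := by
  by_contra! hall
  simp [hall] at h

lemma tsum_ite_eq_sum_range {α : Type*} [AddCommMonoid α] [TopologicalSpace α]
    (hp : ∀ k, p k ↔ k < N) (a : ℕ → α) :
    ∑' k, (if p k then a k else 0) = ∑ k ∈ Finset.range N, a k := by
  rw [tsum_eq_sum (s := Finset.range N) fun k hk => by simp [hp, Finset.mem_range.not.1 hk]]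
  exact Finset.sum_congr rfl fun k hk => by simp [(hp k).2 (Finset.mem_range.1 hk)]

lemma eq_add_tsum_sub_mul_ite (f : ℕ → ℝ) (hp : ∀ k, p k ↔ k < N) :
    f N = f 0 + ∑' k, (f (k + 1) - f k) * (if p k then 1 else 0) := by
  simp only [mul_ite, mul_one, mul_zero]
  rw [tsum_ite_eq_sum_range hp, Finset.sum_range_sub]
  ring

end Counting

lemma MeasurableSet.inter_of_eqOn_comap {Ω β : Type*} [MeasurableSpace β] {m : MeasurableSpace Ω}
    {f g : Ω → β} {B S : Set Ω} (hS : MeasurableSet[MeasurableSpace.comap f ‹_›] S)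
    (hB : MeasurableSet[m] B) (hg : Measurable[m] g) (hfg : Set.EqOn f g B) :
    MeasurableSet[m] (S ∩ B) := by
  obtain ⟨T, hT, rfl⟩ := hS
  have : f ⁻¹' T ∩ B = g ⁻¹' T ∩ B :=
    Set.ext fun ω => and_congr_left fun hω => by rw [Set.mem_preimage, Set.mem_preimage, hfg hω]
  exact this ▸ (hg hT).inter hB

section Integration

variable {Ω β γ E : Type*} [MeasurableSpace Ω] [MeasurableSpace β] [MeasurableSpace γ]
  {μ : Measure Ω} [NormedAddCommGroup E]

lemma ProbabilityTheory.IndepFun.integral_comp_prodMk [NormedSpace ℝ E] [IsFiniteMeasure μ]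
    {X : Ω → β} {Y : Ω → γ} (hXY : IndepFun X Y μ) (hX : Measurable X) (hY : Measurable Y)
    {g : β × γ → E} (hg : StronglyMeasurable g) (hint : Integrable (fun ω => g (X ω, Y ω)) μ) :
    ∫ ω, g (X ω, Y ω) ∂μ = ∫ x, ∫ ω, g (x, Y ω) ∂μ ∂(μ.map X) := by
  have hXYm : Measurable fun ω => (X ω, Y ω) := hX.prodMk hY
  have hmap : μ.map (fun ω => (X ω, Y ω)) = (μ.map X).prod (μ.map Y) :=
    (indepFun_iff_map_prod_eq_prod_map_map hX.aemeasurable hY.aemeasurable).1 hXY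
  have hint' : Integrable g ((μ.map X).prod (μ.map Y)) := by
    rwa [← hmap, integrable_map_measure hg.aestronglyMeasurable hXYm.aemeasurable]
  rw [← integral_map hXYm.aemeasurable hg.aestronglyMeasurable, hmap, integral_prod _ hint']
  exact integral_congr_ae (ae_of_all _ fun x => integral_map hY.aemeasurable
    (hg.comp_measurable measurable_prodMk_left).aestronglyMeasurable)

lemma MeasureTheory.Martingale.setIntegral_sub_eq_zero_of_indepFun [IsFiniteMeasure μ]
    {ι : Type*} [Preorder ι] {ℱ : Filtration ι ‹_›} {f : ι → Ω → ℝ}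
    (hf : Martingale f ℱ μ) {i j : ι} (hij : i ≤ j) {T : Ω → β} {V : Ω → γ} (hT : Measurable T)
    (hV : Measurable[ℱ i] V) (hindep : IndepFun T (fun ω => (V ω, f j ω - f i ω)) μ) {A : Set Ω}
    (hA : MeasurableSet[MeasurableSpace.comap (fun ω => (T ω, V ω)) inferInstance] A) :
    ∫ ω in A, (f j ω - f i ω) ∂μ = 0 := by
  obtain ⟨S, hS, rfl⟩ := hA
  have hfm (n : ι) : StronglyMeasurable (f n) := (hf.stronglyAdapted n).mono (ℱ.le n)
  have hVm : Measurable V := hV.mono (ℱ.le i) le_rfl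
  let g : β × γ × ℝ → ℝ := {q | (q.1, q.2.1) ∈ S}.indicator fun q => q.2.2
  have hg : Measurable g := measurable_snd.snd.indicator
    (hS.preimage (measurable_fst.prodMk measurable_snd.fst))
  have hgS : (fun ω => g (T ω, V ω, f j ω - f i ω))
      = ((fun ω => (T ω, V ω)) ⁻¹' S).indicator fun ω => f j ω - f i ω :=
    funext fun _ => (Set.indicator_comp_right _).symm
  -- freezing `T = x` leaves an `ℱ i`-event, on which the martingale property applies
  have hslice (x : β) : ∫ ω, g (x, V ω, f j ω - f i ω) ∂μ = 0 := by
    have hSx : MeasurableSet[ℱ i] (V ⁻¹' {v | (x, v) ∈ S}) := hV (measurable_prodMk_left hS)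
    have hgx : (fun ω => g (x, V ω, f j ω - f i ω))
        = (V ⁻¹' {v | (x, v) ∈ S}).indicator fun ω => f j ω - f i ω :=
      funext fun _ => (Set.indicator_comp_right _).symm
    rw [hgx, integral_indicator (ℱ.le i _ hSx),
      integral_sub (hf.integrable j).integrableOn (hf.integrable i).integrableOn,
      hf.setIntegral_eq hij hSx, sub_self]
  have hint : Integrable (fun ω => g (T ω, V ω, f j ω - f i ω)) μ :=
    hgS ▸ ((hf.integrable j).sub (hf.integrable i)).indicator ((hT.prodMk hVm) hS)
  rw [← integral_indicator ((hT.prodMk hVm) hS), ← hgS, hindep.integral_comp_prodMk hT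
    (hVm.prodMk ((hfm j).measurable.sub (hfm i).measurable)) hg.stronglyMeasurable hint]
  simp [hslice]

lemma MeasureTheory.martingale_of_setIntegral_eq [NormedSpace ℝ E] [CompleteSpace E]
    [IsFiniteMeasure μ] {ι : Type*} [Preorder ι] {ℱ : Filtration ι ‹_›} {f : ι → Ω → E}
    (hadp : StronglyAdapted ℱ f) (hint : ∀ i, Integrable (f i) μ)
    (hf : ∀ i j, i ≤ j → ∀ s, MeasurableSet[ℱ i] s → ∫ ω in s, f i ω ∂μ = ∫ ω in s, f j ω ∂μ) :
    Martingale f ℱ μ :=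
  ⟨hadp, fun i j hij => (ae_eq_condExp_of_forall_setIntegral_eq (ℱ.le i) (hint j)
    (fun _ _ _ => (hint i).integrableOn) (fun s hs _ => hf i j hij s hs)
    (hadp i).aestronglyMeasurable).symm⟩

variable {F g : Ω → E} {f : ℕ → Ω → E}

lemma MeasureTheory.integrable_of_ae_eq_add_tsum (hF : AEStronglyMeasurable F μ)
    (hg : Integrable g μ) (hf : ∀ k, AEStronglyMeasurable (f k) μ)
    (hsum : ∑' k, ∫⁻ ω, ‖f k ω‖ₑ ∂μ ≠ ⊤) (hFeq : F =ᵐ[μ] fun ω => g ω + ∑' k, f k ω) :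
    Integrable F μ := by
  refine ⟨hF, ?_⟩
  calc ∫⁻ ω, ‖F ω‖ₑ ∂μ ≤ ∫⁻ ω, ‖g ω‖ₑ + ∑' k, ‖f k ω‖ₑ ∂μ := by
        refine lintegral_mono_ae (hFeq.mono fun ω hω => ?_)
        rw [hω]
        exact (enorm_add_le _ _).trans (add_le_add_right enorm_tsum_le_tsum_enorm _)
    _ = ∫⁻ ω, ‖g ω‖ₑ ∂μ + ∑' k, ∫⁻ ω, ‖f k ω‖ₑ ∂μ := by
        rw [lintegral_add_left' hg.1.enorm, lintegral_tsum fun k => (hf k).enorm]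
    _ < ⊤ := ENNReal.add_lt_top.2 ⟨hg.2, hsum.lt_top⟩

lemma MeasureTheory.integral_eq_add_tsum_of_ae_eq [NormedSpace ℝ E] (hF : Integrable F μ)
    (hg : Integrable g μ) (hf : ∀ k, AEStronglyMeasurable (f k) μ)
    (hsum : ∑' k, ∫⁻ ω, ‖f k ω‖ₑ ∂μ ≠ ⊤) (hFeq : F =ᵐ[μ] fun ω => g ω + ∑' k, f k ω) :
    ∫ ω, F ω ∂μ = ∫ ω, g ω ∂μ + ∑' k, ∫ ω, f k ω ∂μ := by
  have hsub : (fun ω => F ω - g ω) =ᵐ[μ] fun ω => ∑' k, f k ω :=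
    hFeq.mono fun ω hω => by simp [hω]
  rw [← integral_tsum hf hsum, ← integral_congr_ae hsub, integral_sub hF hg, add_sub_cancel]

lemma MeasureTheory.setIntegral_eq_add_tsum_of_ae_eq [NormedSpace ℝ E] (hF : Integrable F μ)
    (hg : Integrable g μ) (hf : ∀ k, AEStronglyMeasurable (f k) μ)
    (hsum : ∑' k, ∫⁻ ω, ‖f k ω‖ₑ ∂μ ≠ ⊤) (hFeq : F =ᵐ[μ] fun ω => g ω + ∑' k, f k ω) (s : Set Ω) :
    ∫ ω in s, F ω ∂μ = ∫ ω in s, g ω ∂μ + ∑' k, ∫ ω in s, f k ω ∂μ :=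
  integral_eq_add_tsum_of_ae_eq hF.integrableOn hg.integrableOn (fun k => (hf k).restrict)
    (ne_top_of_le_ne_top hsum (ENNReal.tsum_le_tsum fun _ =>
      lintegral_mono' Measure.restrict_le_self le_rfl)) (ae_restrict_of_ae hFeq)

end Integration

section CountingProcess

variable {Ω : Type*} {τ : ℕ → Ω → ℝ} {t : ℝ} {ω : Ω} {N : ℕ}

noncomputable def countingProcess (τ : ℕ → Ω → ℝ) (t : ℝ) (ω : Ω) : ℝ≥0∞ :=
  ∑' k : ℕ, if τ (k + 1) ω ≤ t then 1 else 0

lemma measurable_countingProcess {m : MeasurableSpace Ω} (hτ : ∀ k, Measurable[m] (τ k)) (t : ℝ) :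
    Measurable[m] (countingProcess τ t) :=
  Measurable.tsum fun _ =>
    Measurable.ite (measurableSet_le (hτ _) measurable_const) measurable_const measurable_const

lemma countingProcess_eq_of_forall_iff_lt (h : ∀ k, τ (k + 1) ω ≤ t ↔ k < N) :
    countingProcess τ t ω = N := by
  simp [countingProcess, tsum_ite_eq_sum_range h]

lemma natFloor_toReal_countingProcess_of_forall_iff_lt (h : ∀ k, τ (k + 1) ω ≤ t ↔ k < N) :
    ⌊(countingProcess τ t ω).toReal⌋₊ = N := by
  simp [countingProcess_eq_of_forall_iff_lt h]

lemma exists_forall_iff_lt_of_countingProcess_ne_top (hmono : Monotone fun k => τ (k + 1) ω)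
    (h : countingProcess τ t ω ≠ ⊤) : ∃ N, ∀ k, τ (k + 1) ω ≤ t ↔ k < N :=
  have ⟨_, hk⟩ := exists_not_of_tsum_ite_ne_top h
  have ⟨N, _, hN⟩ := Nat.exists_le_forall_iff_lt_of_not (fun _ _ hjk => (hmono hjk).trans) hk
  ⟨N, hN⟩

lemma exists_le_forall_iff_lt_of_lt (hmono : Monotone fun k => τ (k + 1) ω) {k : ℕ}
    (h : t < τ (k + 1) ω) : ∃ N ≤ k, ∀ j, τ (j + 1) ω ≤ t ↔ j < N :=
  Nat.exists_le_forall_iff_lt_of_not (fun _ _ hjk => (hmono hjk).trans) h.not_ge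

lemma apply_natFloor_countingProcess_eq (hmono : Monotone fun k => τ (k + 1) ω)
    (h : countingProcess τ t ω ≠ ⊤) (f : ℕ → ℝ) :
    f ⌊(countingProcess τ t ω).toReal⌋₊
      = f 0 + ∑' k, (f (k + 1) - f k) * (if τ (k + 1) ω ≤ t then 1 else 0) := by
  obtain ⟨N, hN⟩ := exists_forall_iff_lt_of_countingProcess_ne_top hmono h
  rw [natFloor_toReal_countingProcess_of_forall_iff_lt hN]
  exact eq_add_tsum_sub_mul_ite f hN

variable [MeasurableSpace Ω] {μ : Measure Ω}

lemma tsum_lintegral_enorm_mul_ite_le {X : ℕ → Ω → ℝ} (hX : ∀ k, AEMeasurable (X k) μ)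
    (hτ : ∀ k, Measurable (τ k)) (hindep : ∀ k, IndepFun (X k) (τ (k + 1)) μ) {C : ℝ≥0∞}
    (hC : ∀ k, ∫⁻ ω, ‖X k ω‖ₑ ∂μ ≤ C) (t : ℝ) :
    ∑' k, ∫⁻ ω, ‖X k ω * (if τ (k + 1) ω ≤ t then 1 else 0)‖ₑ ∂μ
      ≤ C * ∫⁻ ω, countingProcess τ t ω ∂μ := by
  have hI (k : ℕ) : Measurable fun ω => if τ (k + 1) ω ≤ t then (1 : ℝ≥0∞) else 0 :=
    Measurable.ite (measurableSet_le (hτ _) measurable_const) measurable_const measurable_const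
  have hterm (k : ℕ) : ∫⁻ ω, ‖X k ω * (if τ (k + 1) ω ≤ t then 1 else 0)‖ₑ ∂μ
      = (∫⁻ ω, ‖X k ω‖ₑ ∂μ) * ∫⁻ ω, (if τ (k + 1) ω ≤ t then 1 else 0) ∂μ := by
    rw [← lintegral_mul_eq_lintegral_mul_lintegral_of_indepFun'' (hX k).enorm
      (hI k).aemeasurable ((hindep k).comp measurable_enorm
        (Measurable.ite measurableSet_Iic measurable_const measurable_const))]
    congr 1 with ω
    split_ifs <;> simp
  calc ∑' k, ∫⁻ ω, ‖X k ω * (if τ (k + 1) ω ≤ t then 1 else 0)‖ₑ ∂μ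
      ≤ ∑' k, C * ∫⁻ ω, (if τ (k + 1) ω ≤ t then 1 else 0) ∂μ :=
        ENNReal.tsum_le_tsum fun k => (hterm k).trans_le (mul_le_mul_left (hC k) _)
    _ = C * ∫⁻ ω, countingProcess τ t ω ∂μ := by
        rw [ENNReal.tsum_mul_left, ← lintegral_tsum fun k => (hI k).aemeasurable]
        rfl

end CountingProcess

section TimeChange

variable {Ω : Type*} [MeasurableSpace Ω] {μ : Measure Ω} {M : ℕ → Ω → ℝ} {τ : ℕ → Ω → ℝ}
  {Z : ℝ → Ω → ℝ}

lemma ae_apply_natFloor_countingProcess_eq (hτ : ∀ k, Measurable (τ k))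
    (hmono : ∀ ω, Monotone fun k => τ (k + 1) ω) {t : ℝ}
    (hA : ∫⁻ ω, countingProcess τ t ω ∂μ < ⊤) (M : ℕ → Ω → ℝ) :
    ∀ᵐ ω ∂μ, M ⌊(countingProcess τ t ω).toReal⌋₊ ω
      = M 0 ω + ∑' k, (M (k + 1) ω - M k ω) * (if τ (k + 1) ω ≤ t then 1 else 0) :=
  (ae_lt_top (measurable_countingProcess hτ t) hA.ne).mono fun ω hω =>
    apply_natFloor_countingProcess_eq (hmono ω) hω.ne fun n => M n ω

lemma tsum_lintegral_enorm_increment_mul_ite_ne_top (hMint : ∀ n, Integrable (M n) μ) {C : ℝ}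
    (hMincr : ∀ i : ℕ, ∫ ω, |M (i + 1) ω - M i ω| ∂μ ≤ C) (hτ : ∀ k, Measurable (τ k))
    (hindep : IndepFun (fun ω k => τ k ω) (fun ω n => M n ω) μ) {t : ℝ}
    (hA : ∫⁻ ω, countingProcess τ t ω ∂μ < ⊤) :
    ∑' k, ∫⁻ ω, ‖(M (k + 1) ω - M k ω) * (if τ (k + 1) ω ≤ t then 1 else 0)‖ₑ ∂μ ≠ ⊤ := by
  have hincr (k : ℕ) : Integrable (fun ω => M (k + 1) ω - M k ω) μ :=
    (hMint (k + 1)).sub (hMint k)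
  have hL1 (k : ℕ) : ∫⁻ ω, ‖M (k + 1) ω - M k ω‖ₑ ∂μ ≤ ENNReal.ofReal C := by
    rw [← ofReal_integral_norm_eq_lintegral_enorm (hincr k)]
    exact ENNReal.ofReal_le_ofReal (by simpa only [Real.norm_eq_abs] using hMincr k)
  have hindep' (k : ℕ) : IndepFun (fun ω => M (k + 1) ω - M k ω) (τ (k + 1)) μ :=
    (hindep.comp (measurable_pi_apply (k + 1))
      ((measurable_pi_apply (k + 1)).sub (measurable_pi_apply k))).symm
  exact ne_top_of_le_ne_top (ENNReal.mul_lt_top ENNReal.ofReal_lt_top hA).ne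
    (tsum_lintegral_enorm_mul_ite_le (fun k => (hincr k).aemeasurable) hτ hindep' hL1 t)

lemma measurableSet_natural_inter_preimage_Ioc (hZsm : ∀ t, StronglyMeasurable (Z t))
    (hZ : ∀ t ω, Z t ω = M ⌊(countingProcess τ t ω).toReal⌋₊ ω)
    (hmono : ∀ ω, Monotone fun k => τ (k + 1) ω) {s : ℝ} {E : Set Ω}
    (hE : MeasurableSet[Filtration.natural Z hZsm s] E) (k : ℕ) (t : ℝ) :
    MeasurableSet[MeasurableSpace.comap
        (fun ω => ((fun j => τ j ω, fun i => M (min i k) ω) : (ℕ → ℝ) × (ℕ → ℝ))) inferInstance]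
      (E ∩ τ (k + 1) ⁻¹' Set.Ioc s t) := by
  set P : Ω → (ℕ → ℝ) × (ℕ → ℝ) := fun ω => (fun j => τ j ω, fun i => M (min i k) ω)
  have hτm (j : ℕ) : Measurable[MeasurableSpace.comap P inferInstance] (τ j) :=
    ((measurable_pi_apply j).comp measurable_fst).comp (comap_measurable P)
  have hVm : Measurable[MeasurableSpace.comap P inferInstance] fun ω i => M (min i k) ω :=
    measurable_snd.comp (comap_measurable P)
  have heval : Measurable fun p : (ℕ → ℝ) × ℕ => p.1 p.2 :=
    measurable_from_prod_countable_left fun i => measurable_pi_apply i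
  -- where `s < τ (k + 1)`, each `Z u` with `u ≤ s` is `M (min (A u) k)`, a function of `P`
  have hg : Measurable[MeasurableSpace.comap P inferInstance]
      fun ω (u : Set.Iic s) => M (min ⌊(countingProcess τ u ω).toReal⌋₊ k) ω :=
    @measurable_pi_lambda _ _ _ (MeasurableSpace.comap P inferInstance) _ _ fun u =>
      heval.comp (hVm.prodMk (Nat.measurable_floor.comp
        (ENNReal.measurable_toReal.comp (measurable_countingProcess hτm u))))
  rw [Filtration.natural_eq_comap] at hE
  refine hE.inter_of_eqOn_comap (hτm (k + 1) measurableSet_Ioc) hg fun ω hω => funext fun u => ?_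
  obtain ⟨N, hNk, hN⟩ := exists_le_forall_iff_lt_of_lt (hmono ω) (u.2.trans_lt hω.1)
  simp only [hZ, natFloor_toReal_countingProcess_of_forall_iff_lt hN, min_eq_left hNk]

lemma setIntegral_increment_mul_ite_eq_of_le [IsFiniteMeasure μ]
    (hMsm : ∀ n, StronglyMeasurable (M n)) (hM : Martingale M (Filtration.natural M hMsm) μ)
    (hτ : ∀ k, Measurable (τ k)) (hindep : IndepFun (fun ω k => τ k ω) (fun ω n => M n ω) μ)
    (hZsm : ∀ t, StronglyMeasurable (Z t))
    (hZ : ∀ t ω, Z t ω = M ⌊(countingProcess τ t ω).toReal⌋₊ ω)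
    (hmono : ∀ ω, Monotone fun k => τ (k + 1) ω) {s t : ℝ} (hst : s ≤ t) {E : Set Ω}
    (hE : MeasurableSet[Filtration.natural Z hZsm s] E) (k : ℕ) :
    ∫ ω in E, (M (k + 1) ω - M k ω) * (if τ (k + 1) ω ≤ t then 1 else 0) ∂μ
      = ∫ ω in E, (M (k + 1) ω - M k ω) * (if τ (k + 1) ω ≤ s then 1 else 0) ∂μ := by
  have hle (r : ℝ) : MeasurableSet {ω | τ (k + 1) ω ≤ r} :=
    measurableSet_le (hτ _) measurable_const
  have hind (r : ℝ) : (fun ω => (M (k + 1) ω - M k ω) * (if τ (k + 1) ω ≤ r then 1 else 0))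
      = {ω | τ (k + 1) ω ≤ r}.indicator fun ω => M (k + 1) ω - M k ω := by
    ext ω
    by_cases h : τ (k + 1) ω ≤ r <;> simp [h]
  have hold : E ∩ {ω | τ (k + 1) ω ≤ t} ∩ {ω | τ (k + 1) ω ≤ s} = E ∩ {ω | τ (k + 1) ω ≤ s} :=
    Set.ext fun ω => ⟨fun h => ⟨h.1.1, h.2⟩, fun h => ⟨⟨h.1, h.2.trans hst⟩, h.2⟩⟩
  have hfresh : (E ∩ {ω | τ (k + 1) ω ≤ t}) \ {ω | τ (k + 1) ω ≤ s}
      = E ∩ τ (k + 1) ⁻¹' Set.Ioc s t :=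
    Set.ext fun ω => ⟨fun h => ⟨h.1.1, not_le.1 h.2, h.1.2⟩, fun h => ⟨⟨h.1, h.2.2⟩, h.2.1.not_ge⟩⟩
  have hV : Measurable[Filtration.natural M hMsm k] fun ω i => M (min i k) ω :=
    @measurable_pi_lambda _ _ _ (Filtration.natural M hMsm k) _ _ fun i =>
      ((hM.stronglyAdapted _).mono ((Filtration.natural M hMsm).mono (min_le_right i k))).measurable
  have hφ : Measurable fun v : ℕ → ℝ => ((fun i => v (min i k), v (k + 1) - v k) : (ℕ → ℝ) × ℝ) :=
    (measurable_pi_lambda _ fun i => measurable_pi_apply _).prodMk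
      ((measurable_pi_apply _).sub (measurable_pi_apply _))
  have hzero := hM.setIntegral_sub_eq_zero_of_indepFun (k.le_add_right 1)
    (measurable_pi_lambda _ hτ) hV (hindep.comp measurable_id hφ)
    (measurableSet_natural_inter_preimage_Ioc hZsm hZ hmono hE k t)
  rw [hind t, hind s, setIntegral_indicator (hle t), setIntegral_indicator (hle s),
    ← integral_inter_add_sdiff (f := fun ω => M (k + 1) ω - M k ω) (hle s)
      ((hM.integrable (k + 1)).sub (hM.integrable k)).integrableOn, hold, hfresh, hzero,
    add_zero]

end TimeChange

/-- Autoregressive construction of a step martingale: sampling a discrete-time martingale `M`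
(with uniformly bounded increments in `L¹`) at the counting process `A` of an independent
increasing sequence of random times `(τ_k)_{k ≥ 1}` yields a martingale `Z_t = M_{A_t}`
with respect to its natural filtration. -/
theorem step_martingale_autoregressive
    {Ω : Type*} [MeasurableSpace Ω] (μ : Measure Ω) [IsProbabilityMeasure μ]
    (M : ℕ → Ω → ℝ) (hMsm : ∀ n, StronglyMeasurable (M n))
    (hM : Martingale M (MeasureTheory.Filtration.natural M hMsm) μ)
    (C : ℝ) (hMincr : ∀ i : ℕ, ∫ ω, |M (i + 1) ω - M i ω| ∂μ ≤ C)
    (τ : ℕ → Ω → ℝ) (hτmeas : ∀ k, Measurable (τ k))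
    (hτmono : ∀ ω, ∀ j k : ℕ, 1 ≤ j → j ≤ k → τ j ω ≤ τ k ω)
    (hindep : IndepFun (fun ω => fun k : ℕ => τ k ω) (fun ω => fun n : ℕ => M n ω) μ)
    (A : ℝ → Ω → ℝ≥0∞)
    (hAdef : ∀ t ω, A t ω = ∑' k : ℕ, if τ (k + 1) ω ≤ t then (1 : ℝ≥0∞) else 0)
    (hAint : ∀ t : ℝ, ∫⁻ ω, A t ω ∂μ < ⊤)
    (Z : ℝ → Ω → ℝ) (hZdef : ∀ t ω, Z t ω = M ⌊(A t ω).toReal⌋₊ ω)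
    (hZsm : ∀ t, StronglyMeasurable (Z t)) :
    Martingale Z (MeasureTheory.Filtration.natural Z hZsm) μ ∧
    ∀ t : ℝ, ∀ᵐ ω ∂μ,
      Z t ω = M 0 ω
        + ∑' k : ℕ, (M (k + 1) ω - M k ω) * (if τ (k + 1) ω ≤ t then (1 : ℝ) else 0) := by
  obtain rfl : A = countingProcess τ := funext fun t => funext (hAdef t)
  have hmono (ω : Ω) : Monotone fun k => τ (k + 1) ω :=
    fun j k hjk => hτmono ω _ _ (Nat.le_add_left 1 j) (Nat.add_le_add_right hjk 1)
  have hrepr (t : ℝ) : ∀ᵐ ω ∂μ, Z t ω = M 0 ω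
      + ∑' k, (M (k + 1) ω - M k ω) * (if τ (k + 1) ω ≤ t then 1 else 0) :=
    (ae_apply_natFloor_countingProcess_eq hτmeas hmono (hAint t) M).mono fun ω h =>
      (hZdef t ω).trans h
  have hsum (t : ℝ) := tsum_lintegral_enorm_increment_mul_ite_ne_top hM.integrable hMincr hτmeas
    hindep (hAint t)
  have hterm (t : ℝ) (k : ℕ) : AEStronglyMeasurable
      (fun ω => (M (k + 1) ω - M k ω) * (if τ (k + 1) ω ≤ t then 1 else 0)) μ :=
    ((hM.integrable (k + 1)).sub (hM.integrable k)).1.mul (Measurable.ite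
      (measurableSet_le (hτmeas _) measurable_const) measurable_const
        measurable_const).aestronglyMeasurable
  have hZint (t : ℝ) : Integrable (Z t) μ :=
    integrable_of_ae_eq_add_tsum (hZsm t).aestronglyMeasurable (hM.integrable 0) (hterm t)
      (hsum t) (hrepr t)
  refine ⟨martingale_of_setIntegral_eq (Filtration.stronglyAdapted_natural hZsm) hZint
    fun s t hst E hE => ?_, hrepr⟩
  have hexpand (r : ℝ) := setIntegral_eq_add_tsum_of_ae_eq (hZint r) (hM.integrable 0) (hterm r)
    (hsum r) (hrepr r) E
  rw [hexpand s, hexpand t, tsum_congr fun k => setIntegral_increment_mul_ite_eq_of_le hMsm hM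
    hτmeas hindep hZsm hZdef hmono hst hE k]
end

section
/- A process $\theta$ is a lazy clock if and only if there exists a càdlàg process $A$ such that the set $\mathcal{Z}:=\{s: A_{s^-}=0 \text{ or } A_s=0\}$ has almost surely zero Lebesgue measure and $\theta_t = g_t := \sup\{s\leq t: A_{s^-}=0 \text{ or } A_s=0\}$. -/
/-!
For a monotone `g`, the intervals `(g(s⁻), g(s))` over the jump times `s ∈ (a, b]` are disjoint
subintervals of `(g a, g b]` whose lengths are the jumps, so `g` is pure jump on `(a, b]` exactly
when they cover `(g a, g b]` up to a Lebesgue-null set.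

If `A` is càdlàg, `𝒵` is closed, so the last passage time `g_t` lies in `𝒵` and `g` is constant
on every interval avoiding `𝒵`. A point `x ∉ 𝒵` below `g_t` therefore lies in the jump interval
`(g_{b⁻}, g_b) = (g_x, b)`, where `b` is the first point of `𝒵` after `x`. So if `𝒵` is null, `g` is
pure jump; it jumps only at points of `𝒵`, where `g_s = s`.

Conversely, a lazy clock `θ` is the last passage process of `A_t = t - θ_t`: the positive zeros of
`A` are the fixed points of `θ`, which avoid all jump intervals and hence form a null set, and `θ`
does not jump between `g_t` and `t`, so `θ_t = θ_{g_t} = g_t`.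
-/

open MeasureTheory Function Set

/-- A lazy clock sample path on `[0,∞)`: grounded, nondecreasing, right-continuous,
piecewise constant (equal to the sum of its jumps), and synchronizing to calendar time
at every jump. -/
def IsLazyClockPath (f : ℝ → ℝ) : Prop :=
  f 0 = 0 ∧
  (∀ s t : ℝ, 0 ≤ s → s ≤ t → f s ≤ f t) ∧
  (∀ t : ℝ, 0 ≤ t → ContinuousWithinAt f (Set.Ici t) t) ∧
  (∀ t : ℝ, 0 ≤ t → f t = ∑' s : Set.Ioc (0 : ℝ) t, (f s - Function.leftLim f s)) ∧
  (∀ s : ℝ, 0 < s → f s ≠ Function.leftLim f s → f s = s)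

/-- A lazy clock: a measurable process whose sample paths are a.s. lazy clock paths. -/
def IsLazyClock {Ω : Type*} [MeasurableSpace Ω] (μ : Measure Ω) (θ : ℝ → Ω → ℝ) : Prop :=
  (∀ t, Measurable (θ t)) ∧ ∀ᵐ ω ∂μ, IsLazyClockPath (fun t => θ t ω)

/-- A càdlàg path on `[0,∞)`: right-continuous with left limits. -/
def IsCadlagPath (f : ℝ → ℝ) : Prop :=
  (∀ t : ℝ, 0 ≤ t → ContinuousWithinAt f (Set.Ici t) t) ∧
  (∀ t : ℝ, 0 < t → ∃ l : ℝ, Filter.Tendsto f (nhdsWithin t (Set.Iio t)) (nhds l))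

open Filter Topology

theorem leftLim_congr {α β : Type*} [LinearOrder α] [TopologicalSpace α] [OrderTopology α]
    [TopologicalSpace β] [T2Space β] {f g : α → β} {a : α} (hfg : f =ᶠ[𝓝[<] a] g)
    (ha : f a = g a) : leftLim f a = leftLim g a := by
  rcases eq_or_neBot (𝓝[<] a) with hbot | hbot
  · rw [leftLim_eq_of_eq_bot f hbot, leftLim_eq_of_eq_bot g hbot, ha]
  by_cases hf : ∃ y, Tendsto f (𝓝[<] a) (𝓝 y)
  · obtain ⟨y, hy⟩ := hf
    rw [leftLim_eq_of_tendsto hy, leftLim_eq_of_tendsto (hy.congr' hfg)]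
  · have hg : ¬∃ y, Tendsto g (𝓝[<] a) (𝓝 y) := fun ⟨y, hy⟩ => hf ⟨y, hy.congr' hfg.symm⟩
    rw [leftLim_eq_of_not_tendsto f hf, leftLim_eq_of_not_tendsto g hg, ha]

theorem biUnion_Ioo_leftLim_eq_inter_support (g : ℝ → ℝ) (S : Set ℝ) :
    ⋃ s ∈ S, Ioo (leftLim g s) (g s) =
      ⋃ s ∈ S ∩ support fun s => ENNReal.ofReal (g s - leftLim g s), Ioo (leftLim g s) (g s) := by
  refine (biUnion_subset_biUnion_left inter_subset_left).antisymm' ?_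
  refine iUnion₂_subset fun s hs x hx => mem_biUnion ⟨hs, ?_⟩ hx
  simpa using hx.1.trans hx.2

namespace Monotone

variable {g : ℝ → ℝ}

theorem pairwise_disjoint_Ioo_leftLim (hg : Monotone g) :
    Pairwise (Disjoint on fun s => Ioo (leftLim g s) (g s)) :=
  (pairwise_disjoint_on _).2 fun _ _ hab => Set.disjoint_left.2 fun _ hxa hxb =>
    (hxa.2.trans_le (hg.le_leftLim hab)).not_gt hxb.1

theorem countable_support_jump (hg : Monotone g) :
    (support fun s => ENNReal.ofReal (g s - leftLim g s)).Countable := by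
  refine Countable.mono (s₂ := {s | ¬ContinuousAt g s}) (fun s hs hcont => hs ?_)
    hg.countable_not_continuousAt
  simp [hcont.continuousWithinAt.leftLim_eq]

theorem measurableSet_biUnion_Ioo_leftLim (hg : Monotone g) (S : Set ℝ) :
    MeasurableSet (⋃ s ∈ S, Ioo (leftLim g s) (g s)) := by
  rw [biUnion_Ioo_leftLim_eq_inter_support]
  exact .biUnion (hg.countable_support_jump.mono inter_subset_right) fun _ _ => measurableSet_Ioo

theorem volume_biUnion_Ioo_leftLim (hg : Monotone g) (S : Set ℝ) :
    volume (⋃ s ∈ S, Ioo (leftLim g s) (g s)) = ∑' s : S, ENNReal.ofReal (g s - leftLim g s) := by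
  rw [biUnion_Ioo_leftLim_eq_inter_support, measure_biUnion
    (hg.countable_support_jump.mono inter_subset_right)
    (hg.pairwise_disjoint_Ioo_leftLim.set_pairwise _) fun _ _ => measurableSet_Ioo]
  simp only [Real.volume_Ioo]
  rw [tsum_subtype (S ∩ _) fun s => ENNReal.ofReal (g s - leftLim g s), indicator_inter_support,
    ← tsum_subtype]

theorem biUnion_Ioo_leftLim_subset (hg : Monotone g) (a b : ℝ) :
    ⋃ s ∈ Ioc a b, Ioo (leftLim g s) (g s) ⊆ Ioc (g a) (g b) :=
  iUnion₂_subset fun _ hs _ hx => ⟨(hg.le_leftLim hs.1).trans_lt hx.1, (hx.2.trans_le (hg hs.2)).le⟩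

theorem sub_eq_tsum_jump_iff (hg : Monotone g) {a b : ℝ} (hab : a ≤ b) :
    g b - g a = ∑' s : Ioc a b, (g s - leftLim g s) ↔
      volume (Ioc (g a) (g b) \ ⋃ s ∈ Ioc a b, Ioo (leftLim g s) (g s)) = 0 := by
  set U := ⋃ s ∈ Ioc a b, Ioo (leftLim g s) (g s)
  have hUle : volume U ≤ ENNReal.ofReal (g b - g a) := by
    simpa only [Real.volume_Ioc] using
      measure_mono (μ := volume) (hg.biUnion_Ioo_leftLim_subset a b)
  have hjump : ∀ s : Ioc a b, 0 ≤ g s - leftLim g s := fun s => sub_nonneg.2 (hg.leftLim_le le_rfl)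
  have hU : volume U = ENNReal.ofReal (∑' s : Ioc a b, (g s - leftLim g s)) := by
    have hfin : ∑' s : Ioc a b, ENNReal.ofReal (g s - leftLim g s) ≠ ⊤ :=
      (hg.volume_biUnion_Ioo_leftLim _ ▸ hUle).trans_lt ENNReal.ofReal_lt_top |>.ne
    rw [hg.volume_biUnion_Ioo_leftLim, ENNReal.ofReal_tsum_of_nonneg hjump
      ((ENNReal.summable_toReal hfin).congr fun s => ENNReal.toReal_ofReal (hjump s))]
  have hsum_le : ∑' s : Ioc a b, (g s - leftLim g s) ≤ g b - g a :=
    (ENNReal.ofReal_le_ofReal_iff (sub_nonneg.2 (hg hab))).1 (hU ▸ hUle)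
  rw [measure_sdiff (hg.biUnion_Ioo_leftLim_subset a b)
    (hg.measurableSet_biUnion_Ioo_leftLim _).nullMeasurableSet
    (hUle.trans_lt ENNReal.ofReal_lt_top).ne, Real.volume_Ioc, hU, tsub_eq_zero_iff_le,
    ENNReal.ofReal_le_ofReal_iff (tsum_nonneg hjump)]
  exact ⟨fun h => h.le, fun h => (h.antisymm' hsum_le).symm⟩

end Monotone

/-- The set `𝒵` of the paper. -/
def zeroSet (A : ℝ → ℝ) : Set ℝ := {s | 0 ≤ s ∧ (leftLim A s = 0 ∨ A s = 0)}

/-- The last passage time `g_t` of the paper. -/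
noncomputable def lastPassage (A : ℝ → ℝ) (t : ℝ) : ℝ :=
  sSup {s | 0 ≤ s ∧ s ≤ t ∧ (leftLim A s = 0 ∨ A s = 0)}

def IsLastPassage (f A : ℝ → ℝ) : Prop :=
  IsCadlagPath A ∧ volume (zeroSet A) = 0 ∧ ∀ t, 0 ≤ t → f t = lastPassage A t

section ZeroSet

variable {A : ℝ → ℝ}

theorem notMem_zeroSet_of_le_abs (hA : IsCadlagPath A) {a b c s : ℝ} (ha : 0 ≤ a) (hc : 0 < c)
    (h : ∀ u ∈ Ioo a b, c ≤ |A u|) (hs : s ∈ Ioo a b) : s ∉ zeroSet A := by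
  obtain ⟨l, hl⟩ := hA.2 s (ha.trans_lt hs.1)
  have hcl : c ≤ |l| := ge_of_tendsto hl.abs <|
    eventually_of_mem (Ioo_mem_nhdsLT hs.1) fun u hu => h u ⟨hu.1, hu.2.trans hs.2⟩
  rintro ⟨-, h0 | h0⟩
  · rw [leftLim_eq_of_tendsto hl] at h0
    simp only [h0, abs_zero] at hcl
    linarith
  · have := h s hs
    simp only [h0, abs_zero] at this
    linarith

theorem isClosed_zeroSet (hA : IsCadlagPath A) : IsClosed (zeroSet A) := by
  refine isOpen_compl_iff.1 (isOpen_iff_mem_nhds.2 fun p hp => ?_)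
  rcases lt_or_ge p 0 with hp0 | hp0
  · filter_upwards [Iio_mem_nhds hp0] with s hs h using h.1.not_gt hs
  have hAp : A p ≠ 0 := fun h => hp ⟨hp0, Or.inr h⟩
  rw [← nhdsLT_sup_nhdsGE, mem_sup]
  constructor
  · rcases hp0.eq_or_lt with rfl | hp0
    · filter_upwards [self_mem_nhdsWithin] with s hs h using h.1.not_gt hs
    obtain ⟨l, hl⟩ := hA.2 p hp0
    have hl0 : l ≠ 0 := fun h => hp ⟨hp0.le, Or.inl (h ▸ leftLim_eq_of_tendsto hl)⟩
    obtain ⟨a, ha, hsub⟩ := mem_nhdsLT_iff_exists_Ioo_subset.1 <|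
      hl.abs.eventually (eventually_ge_nhds (half_lt_self (abs_pos.2 hl0)))
    filter_upwards [Ioo_mem_nhdsLT (max_lt ha hp0)] with s hs
    exact notMem_zeroSet_of_le_abs hA (le_max_right _ _) (half_pos (abs_pos.2 hl0))
      (fun u hu => hsub ⟨(le_max_left _ _).trans_lt hu.1, hu.2⟩) hs
  · obtain ⟨b, hb, hsub⟩ := mem_nhdsGE_iff_exists_Ico_subset.1 <|
      (hA.1 p hp0).tendsto.abs.eventually (eventually_ge_nhds (half_lt_self (abs_pos.2 hAp)))
    filter_upwards [Ico_mem_nhdsGE hb] with s hs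
    rcases hs.1.eq_or_lt with rfl | hps
    · exact hp
    exact notMem_zeroSet_of_le_abs hA hp0 (half_pos (abs_pos.2 hAp))
      (fun u hu => hsub ⟨hu.1.le, hu.2⟩) ⟨hps, hs.2⟩

end ZeroSet

section LastPassage

variable {A : ℝ → ℝ} {s t x : ℝ}

theorem lastPassage_nonneg : 0 ≤ lastPassage A t :=
  Real.sSup_nonneg fun _ hs => hs.1

theorem lastPassage_le (ht : 0 ≤ t) : lastPassage A t ≤ t :=
  Real.sSup_le (fun _ hs => hs.2.1) ht

theorem le_lastPassage (hs : s ∈ zeroSet A) (hst : s ≤ t) : s ≤ lastPassage A t :=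
  le_csSup ⟨t, fun _ hu => hu.2.1⟩ ⟨hs.1, hst, hs.2⟩

theorem lastPassage_eq_self (ht : t ∈ zeroSet A) : lastPassage A t = t :=
  (lastPassage_le ht.1).antisymm (le_lastPassage ht le_rfl)

theorem lastPassage_zero : lastPassage A 0 = 0 :=
  (lastPassage_le le_rfl).antisymm lastPassage_nonneg

theorem monotone_lastPassage : Monotone (lastPassage A) := fun _ _ hst =>
  Real.sSup_le (fun _ hs => le_lastPassage ⟨hs.1, hs.2.2⟩ (hs.2.1.trans hst)) lastPassage_nonneg

theorem lastPassage_mem_of_pos (hA : IsCadlagPath A) (h : 0 < lastPassage A t) :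
    lastPassage A t ∈ zeroSet A ∧ lastPassage A t ≤ t := by
  have hS : {s | 0 ≤ s ∧ s ≤ t ∧ (leftLim A s = 0 ∨ A s = 0)} = zeroSet A ∩ Iic t := by
    ext s
    exact ⟨fun ⟨h0, hst, hs⟩ => ⟨⟨h0, hs⟩, hst⟩, fun ⟨⟨h0, hs⟩, hst⟩ => ⟨h0, hst, hs⟩⟩
  have hne : (zeroSet A ∩ Iic t).Nonempty := by
    by_contra hemp
    rw [lastPassage, hS, not_nonempty_iff_eq_empty.1 hemp, Real.sSup_empty] at h
    exact h.false
  rw [lastPassage, hS]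
  exact ((isClosed_zeroSet hA).inter isClosed_Iic).csSup_mem hne ⟨t, fun _ hs => hs.2⟩

theorem lastPassage_eq_of_forall_notMem (hxt : x ≤ t) (h : ∀ z ∈ Ioc x t, z ∉ zeroSet A) :
    lastPassage A t = lastPassage A x := by
  refine (monotone_lastPassage hxt).antisymm' (Real.sSup_le (fun z hz => ?_) lastPassage_nonneg)
  refine le_lastPassage ⟨hz.1, hz.2.2⟩ (not_lt.1 fun hxz => h z ⟨hxz, hz.2.1⟩ ⟨hz.1, hz.2.2⟩)

theorem continuousWithinAt_lastPassage (hA : IsCadlagPath A) (ht : 0 ≤ t) :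
    ContinuousWithinAt (lastPassage A) (Ici t) t := by
  by_cases h : ∃ b > t, ∀ z ∈ Ioo t b, z ∉ zeroSet A
  · obtain ⟨b, hb, h⟩ := h
    refine continuousWithinAt_const.congr_of_eventuallyEq ?_ rfl
    filter_upwards [Ico_mem_nhdsGE hb] with u hu
    exact lastPassage_eq_of_forall_notMem hu.1 fun z hz => h z ⟨hz.1, hz.2.trans_lt hu.2⟩
  push Not at h
  have htZ : t ∈ zeroSet A := (isClosed_zeroSet hA).closure_eq ▸ Metric.mem_closure_iff.2
    fun ε hε => (h (t + ε) (lt_add_of_pos_right t hε)).imp fun z hz =>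
      ⟨hz.2, by rw [Real.dist_eq, abs_sub_lt_iff]; constructor <;> linarith [hz.1.1, hz.1.2]⟩
  rw [ContinuousWithinAt, lastPassage_eq_self htZ]
  refine tendsto_of_tendsto_of_tendsto_of_le_of_le' tendsto_const_nhds continuousWithinAt_id ?_ ?_
  · filter_upwards [self_mem_nhdsWithin] with u hu
    exact (lastPassage_eq_self htZ).symm.le.trans (monotone_lastPassage hu)
  · filter_upwards [self_mem_nhdsWithin] with u hu
    exact lastPassage_le (ht.trans hu)

theorem lastPassage_eq_self_of_ne_leftLim (hs : 0 < s)
    (h : lastPassage A s ≠ leftLim (lastPassage A) s) : lastPassage A s = s := by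
  by_contra hne
  have hlt : lastPassage A s < s := (lastPassage_le hs.le).lt_of_ne hne
  refine h (leftLim_eq_of_tendsto (tendsto_const_nhds.congr' ?_)).symm
  filter_upwards [Ioo_mem_nhdsLT hlt] with u hu
  exact lastPassage_eq_of_forall_notMem hu.2.le fun z hz hzZ =>
    (le_lastPassage hzZ hz.2).not_gt (hu.1.trans hz.1)

theorem exists_mem_Ioo_leftLim_lastPassage (hA : IsCadlagPath A)
    (hx : x ∈ Ioc 0 (lastPassage A t)) (hxZ : x ∉ zeroSet A) :
    ∃ s ∈ Ioc 0 t, x ∈ Ioo (leftLim (lastPassage A) s) (lastPassage A s) := by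
  obtain ⟨hgZ, hgt⟩ := lastPassage_mem_of_pos hA (hx.1.trans_le hx.2)
  have hbdd : BddBelow (zeroSet A ∩ Ici x) := ⟨x, fun _ hz => hz.2⟩
  set b := sInf (zeroSet A ∩ Ici x)
  have hb : b ∈ zeroSet A ∩ Ici x :=
    ((isClosed_zeroSet hA).inter isClosed_Ici).csInf_mem ⟨_, hgZ, hx.2⟩ hbdd
  have hxb : x < b := hb.2.lt_of_ne fun h => hxZ (h ▸ hb.1)
  have hleft : leftLim (lastPassage A) b = lastPassage A x := by
    refine leftLim_eq_of_tendsto (tendsto_const_nhds.congr' ?_)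
    filter_upwards [Ioo_mem_nhdsLT hxb] with u hu
    exact (lastPassage_eq_of_forall_notMem hu.1.le fun z hz hzZ =>
      (csInf_le hbdd ⟨hzZ, hz.1.le⟩).not_gt (hz.2.trans_lt hu.2)).symm
  have hgx : lastPassage A x < x := (lastPassage_le hx.1.le).lt_of_ne fun h =>
    hxZ (h ▸ (lastPassage_mem_of_pos hA (h.symm ▸ hx.1)).1)
  refine ⟨b, ⟨hx.1.trans hxb, (csInf_le hbdd ⟨hgZ, hx.2⟩).trans hgt⟩, ?_, ?_⟩
  · rwa [hleft]
  · rwa [lastPassage_eq_self hb.1]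

theorem lastPassage_eq_tsum (hA : IsCadlagPath A) (hvol : volume (zeroSet A) = 0) (ht : 0 ≤ t) :
    lastPassage A t = ∑' s : Ioc 0 t, (lastPassage A s - leftLim (lastPassage A) s) := by
  have key := monotone_lastPassage.sub_eq_tsum_jump_iff (g := lastPassage A) ht
  rw [lastPassage_zero, sub_zero] at key
  rw [key]
  refine measure_mono_null (fun x hx => not_not.1 fun hxZ => hx.2 ?_) hvol
  obtain ⟨s, hs, hxs⟩ := exists_mem_Ioo_leftLim_lastPassage hA hx.1 hxZ
  exact mem_biUnion hs hxs

theorem isLazyClockPath_lastPassage (hA : IsCadlagPath A) (hvol : volume (zeroSet A) = 0) :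
    IsLazyClockPath (lastPassage A) :=
  ⟨lastPassage_zero, fun _ _ _ hst => monotone_lastPassage hst,
    fun _ ht => continuousWithinAt_lastPassage hA ht, fun _ ht => lastPassage_eq_tsum hA hvol ht,
    fun _ hs h => lastPassage_eq_self_of_ne_leftLim hs h⟩

end LastPassage

section LazyClock

variable {f F : ℝ → ℝ}

theorem IsLazyClockPath.congr (hf : IsLazyClockPath f) (hfF : EqOn f F (Ici 0)) :
    IsLazyClockPath F := by
  obtain ⟨h0, hmono, hrc, hsum, hsync⟩ := hf
  have hleft : ∀ s, 0 < s → leftLim f s = leftLim F s := fun s hs =>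
    leftLim_congr (eventually_of_mem (Ioo_mem_nhdsLT hs) fun u hu => hfF hu.1.le) (hfF hs.le)
  refine ⟨hfF (mem_Ici.2 le_rfl) ▸ h0, fun s t hs hst => ?_, fun t ht => ?_, fun t ht => ?_,
    fun s hs h => ?_⟩
  · rw [← hfF hs, ← hfF (hs.trans hst)]
    exact hmono s t hs hst
  · exact (hrc t ht).congr (fun u hu => (hfF (ht.trans hu)).symm) (hfF ht).symm
  · rw [← hfF ht, hsum t ht]
    exact tsum_congr fun s => by rw [hfF s.2.1.le, hleft s s.2.1]
  · rw [← hfF hs.le, ← hleft s hs] at h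
    rw [← hfF hs.le]
    exact hsync s hs h

theorem IsLastPassage.isLazyClockPath {f A : ℝ → ℝ} (h : IsLastPassage f A) : IsLazyClockPath f :=
  (isLazyClockPath_lastPassage h.1 h.2.1).congr fun t ht => (h.2.2 t ht).symm

theorem leftLim_id_sub (hF : Monotone F) (s : ℝ) :
    leftLim (fun u => u - F u) s = s - leftLim F s :=
  leftLim_eq_of_tendsto ((continuousWithinAt_id.tendsto).sub (hF.tendsto_leftLim s))

theorem isCadlagPath_id_sub (hF : Monotone F)
    (hrc : ∀ t, 0 ≤ t → ContinuousWithinAt F (Ici t) t) : IsCadlagPath fun s => s - F s :=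
  ⟨fun t ht => continuousWithinAt_id.sub (hrc t ht),
    fun t _ => ⟨_, continuousWithinAt_id.tendsto.sub (hF.tendsto_leftLim t)⟩⟩

theorem IsLazyClockPath.zeroSet_id_sub (hF : IsLazyClockPath F) (hmono : Monotone F) :
    zeroSet (fun s => s - F s) = {s | 0 ≤ s ∧ F s = s} := by
  obtain ⟨h0, -, -, -, hsync⟩ := hF
  ext s
  simp only [zeroSet, mem_ofPred_eq, leftLim_id_sub hmono, sub_eq_zero]
  refine ⟨fun ⟨hs, h⟩ => ⟨hs, ?_⟩, fun ⟨hs, h⟩ => ⟨hs, Or.inr h.symm⟩⟩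
  rcases h with h | h
  · rcases hs.eq_or_lt with rfl | hs
    · exact h0
    · exact not_not.1 fun hne => hne (hsync s hs (h ▸ hne))
  · exact h.symm

theorem IsLazyClockPath.volume_setOf_apply_eq_self (hF : IsLazyClockPath F) (hmono : Monotone F) :
    volume {s | 0 ≤ s ∧ F s = s} = 0 := by
  obtain ⟨h0, -, -, hsum, -⟩ := hF
  have hfix : ∀ n : ℕ, volume {s : ℝ | 0 < s ∧ s ≤ n ∧ F s = s} = 0 := fun n => by
    have hjump := (hmono.sub_eq_tsum_jump_iff n.cast_nonneg).1
      (by rw [h0, sub_zero]; exact hsum n n.cast_nonneg)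
    refine measure_mono_null ?_ hjump
    rintro s ⟨hs, hsn, hFs⟩
    refine ⟨⟨by rwa [h0], hFs ▸ hmono hsn⟩, ?_⟩
    simp only [mem_iUnion, not_exists]
    intro r _ hsr
    rcases le_or_gt r s with hrs | hsr'
    · exact (hsr.2.trans_le (hFs ▸ hmono hrs)).false
    · exact (hsr.1.trans_le (hFs ▸ hmono.le_leftLim hsr')).false
  refine measure_mono_null (t := {0} ∪ ⋃ n : ℕ, {s : ℝ | 0 < s ∧ s ≤ n ∧ F s = s})
    (fun s ⟨hs, hFs⟩ => ?_) (measure_union_null (measure_singleton 0) (measure_iUnion_null hfix))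
  rcases hs.eq_or_lt with rfl | hs
  · exact Or.inl rfl
  · obtain ⟨n, hn⟩ := exists_nat_ge s
    exact Or.inr (mem_iUnion.2 ⟨n, hs, hn, hFs⟩)

theorem IsLazyClockPath.lastPassage_id_sub (hF : IsLazyClockPath F) (hmono : Monotone F)
    {t : ℝ} (ht : 0 ≤ t) : lastPassage (fun s => s - F s) t = F t := by
  have hZ := hF.zeroSet_id_sub hmono
  obtain ⟨h0, -, hrc, hsum, hsync⟩ := hF
  set p := lastPassage (fun s => s - F s) t
  have hFp : F p = p := by
    rcases (lastPassage_nonneg : 0 ≤ p).eq_or_lt with h | h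
    · have hp0 : p = 0 := h.symm
      rw [hp0, h0]
    · have := (lastPassage_mem_of_pos (isCadlagPath_id_sub hmono hrc) h).1
      rw [hZ] at this
      exact this.2
  have hnojump : ∀ s ∈ Ioc p t, F s - leftLim F s = 0 := fun s hs => by
    refine sub_eq_zero.2 (not_not.1 fun hne => ?_)
    have hFs := hsync s (lastPassage_nonneg.trans_lt hs.1) hne
    exact (le_lastPassage (hZ ▸ ⟨lastPassage_nonneg.trans hs.1.le, hFs⟩) hs.2).not_gt hs.1
  rw [hsum t ht, ← hFp, hsum p lastPassage_nonneg,
    tsum_subtype (Ioc 0 p) fun s => F s - leftLim F s,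
    tsum_subtype (Ioc 0 t) fun s => F s - leftLim F s]
  refine tsum_congr fun s => ?_
  by_cases hsp : s ∈ Ioc 0 p
  · rw [indicator_of_mem hsp, indicator_of_mem (Ioc_subset_Ioc_right (lastPassage_le ht) hsp)]
  · rw [indicator_of_notMem hsp]
    by_cases hst : s ∈ Ioc 0 t
    · rw [indicator_of_mem hst]
      exact (hnojump s ⟨not_le.1 fun h => hsp ⟨hst.1, h⟩, hst.2⟩).symm
    · exact (indicator_of_notMem hst _).symm

/-- Freezing `f` at `f 0` on negative times makes it monotone on all of `ℝ`. -/
theorem IsLazyClockPath.isLastPassage (hf : IsLazyClockPath f) :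
    IsLastPassage f fun s => s - f (max s 0) := by
  have hmono : Monotone fun s => f (max s 0) := fun s t hst =>
    hf.2.1 _ _ (le_max_right s 0) (max_le_max_right 0 hst)
  have hF : IsLazyClockPath fun s => f (max s 0) := hf.congr fun t ht => by
    rw [max_eq_left (mem_Ici.1 ht)]
  refine ⟨isCadlagPath_id_sub hmono hF.2.2.1, ?_, fun t ht => ?_⟩
  · rw [hF.zeroSet_id_sub hmono]
    exact hF.volume_setOf_apply_eq_self hmono
  · rw [hF.lastPassage_id_sub hmono ht, max_eq_left ht]

end LazyClock

theorem isLazyClock_iff_lastPassage_general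
    {Ω : Type*} [MeasurableSpace Ω] (μ : Measure Ω)
    (θ : ℝ → Ω → ℝ) (hθmeas : ∀ t, Measurable (θ t)) :
    IsLazyClock μ θ ↔
      ∃ A : ℝ → Ω → ℝ, (∀ t, Measurable (A t)) ∧
        ∀ᵐ ω ∂μ,
          IsCadlagPath (fun t => A t ω) ∧
          volume {s : ℝ | 0 ≤ s ∧
            (Function.leftLim (fun u => A u ω) s = 0 ∨ A s ω = 0)} = 0 ∧
          ∀ t : ℝ, 0 ≤ t →
            θ t ω = sSup {s : ℝ | 0 ≤ s ∧ s ≤ t ∧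
              (Function.leftLim (fun u => A u ω) s = 0 ∨ A s ω = 0)} := by
  constructor
  · rintro ⟨-, hθ⟩
    exact ⟨fun t ω => t - θ (max t 0) ω, fun t => measurable_const.sub (hθmeas _),
      hθ.mono fun ω hω => hω.isLastPassage⟩
  · rintro ⟨A, -, hA⟩
    exact ⟨hθmeas, hA.mono fun ω hω => IsLastPassage.isLazyClockPath hω⟩

/-- A process `θ` is a lazy clock if and only if there is a càdlàg process `A` whose zero set
`𝒵 = {s : A_{s⁻} = 0 or A_s = 0}` has a.s. zero Lebesgue measure, such that `θ_t` is the last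
point of `𝒵` before `t`. -/
theorem isLazyClock_iff_lastPassage
    {Ω : Type*} [MeasurableSpace Ω] (μ : Measure Ω) [IsProbabilityMeasure μ]
    (θ : ℝ → Ω → ℝ) (hθmeas : ∀ t, Measurable (θ t)) :
    IsLazyClock μ θ ↔
      ∃ A : ℝ → Ω → ℝ, (∀ t, Measurable (A t)) ∧
        ∀ᵐ ω ∂μ,
          IsCadlagPath (fun t => A t ω) ∧
          volume {s : ℝ | 0 ≤ s ∧
            (Function.leftLim (fun u => A u ω) s = 0 ∨ A s ω = 0)} = 0 ∧
          ∀ t : ℝ, 0 ≤ t →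
            θ t ω = sSup {s : ℝ | 0 ≤ s ∧ s ≤ t ∧
              (Function.leftLim (fun u => A u ω) s = 0 ∨ A s ω = 0)} :=
  isLazyClock_iff_lastPassage_general μ θ hθmeas
end

section
/- Let $W$ be a standard Brownian motion, $b\in\mathbb{R}$, and $\tilde{g}_t := \sup\{s\leq t: W_s = bs\}$ the last passage time of $W$ at the line $s\mapsto bs$ before $t$. Then for every integer $k\geq 1$, $\mathbb{E}[\tilde{g}_t^{\,k}] = \frac{\Gamma(k+\frac12)}{\sqrt{\pi}\,(k-1)!}\int_0^t u^{k-1}e^{-\frac{b^2}{2}u}\,du$. -/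
open MeasureTheory Real

/-- Standard normal density. -/
noncomputable def stdNormalPdf (x : ℝ) : ℝ := (Real.sqrt (2 * Real.pi))⁻¹ * Real.exp (-x ^ 2 / 2)

/-- Standard normal CDF. -/
noncomputable def stdNormalCdf (x : ℝ) : ℝ := ∫ u in Set.Iic x, stdNormalPdf u

/-!
On `(0, t)` one has `φ(b√s)/√s = h(s) := e^{-b²s/2}/√(2πs)` and `2bΦ(b√w) - b = b² ∫₀^w h`,
so the density of `g` is `h(s) (2 h(t - s) + b² ∫₀^{t-s} h)`. The convolution
`∫₀^u s^k h(s) h(u - s) ds` is a Beta integral, equal to `Γ(k + 1/2) / (2√π k!) · u^k e^{-b²u/2}`.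
By Fubini the `b²`-term becomes an integral of this convolution over `u ∈ (0, t)`, hence
`E[g^k] = Γ(k + 1/2) / (√π k!) · (t^k e^{-b²t/2} + (b²/2) ∫₀^t u^k e^{-b²u/2} du)`, and one
integration by parts turns the bracket into `k ∫₀^t u^{k-1} e^{-b²u/2} du`.
-/

open Set ProbabilityTheory
open scoped ENNReal Nat

lemma stdNormalPdf_eq_gaussianPDFReal : stdNormalPdf = gaussianPDFReal 0 1 := by
  ext x
  simp [stdNormalPdf, gaussianPDFReal]

lemma integrable_stdNormalPdf : Integrable stdNormalPdf :=
  stdNormalPdf_eq_gaussianPDFReal ▸ integrable_gaussianPDFReal 0 1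

@[fun_prop]
lemma continuous_stdNormalPdf : Continuous stdNormalPdf := by
  unfold stdNormalPdf
  fun_prop

lemma stdNormalCdf_zero : stdNormalCdf 0 = 1 / 2 := by
  have h_even : ∫ x in Ioi (0 : ℝ), stdNormalPdf x = stdNormalCdf 0 := by
    rw [stdNormalCdf, ← neg_zero, ← integral_comp_neg_Iic]
    simp [stdNormalPdf]
  have h_total : stdNormalCdf 0 + ∫ x in Ioi (0 : ℝ), stdNormalPdf x = 1 := by
    rw [stdNormalCdf, intervalIntegral.integral_Iic_add_Ioi integrable_stdNormalPdf.integrableOn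
      integrable_stdNormalPdf.integrableOn, stdNormalPdf_eq_gaussianPDFReal,
      integral_gaussianPDFReal_eq_one 0 one_ne_zero]
  linarith

lemma hasDerivAt_stdNormalCdf (x : ℝ) : HasDerivAt stdNormalCdf (stdNormalPdf x) x := by
  have h : stdNormalCdf = fun x => stdNormalCdf 0 + ∫ u in (0 : ℝ)..x, stdNormalPdf u := by
    ext x
    rw [stdNormalCdf, stdNormalCdf, ← intervalIntegral.integral_Iic_sub_Iic
      integrable_stdNormalPdf.integrableOn integrable_stdNormalPdf.integrableOn]
    ring
  rw [h]
  exact (intervalIntegral.integral_hasDerivAt_right integrable_stdNormalPdf.intervalIntegrable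
    (continuous_stdNormalPdf.stronglyMeasurableAtFilter _ _)
    continuous_stdNormalPdf.continuousAt).const_add _

@[fun_prop]
lemma continuous_stdNormalCdf : Continuous stdNormalCdf :=
  continuous_iff_continuousAt.2 fun x => (hasDerivAt_stdNormalCdf x).continuousAt

lemma integral_rpow_mul_one_sub_rpow {α β : ℝ} (hα : 0 < α) (hβ : 0 < β) :
    ∫ x in (0 : ℝ)..1, x ^ (α - 1) * (1 - x) ^ (β - 1) = beta α β := by
  have h : Complex.betaIntegral α β
      = ↑(∫ x in (0 : ℝ)..1, x ^ (α - 1) * (1 - x) ^ (β - 1)) := by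
    rw [Complex.betaIntegral, ← intervalIntegral.integral_ofReal]
    refine intervalIntegral.integral_congr fun x hx => ?_
    rw [uIcc_of_le zero_le_one] at hx
    push_cast
    rw [Complex.ofReal_cpow hx.1, Complex.ofReal_cpow (sub_nonneg.2 hx.2)]
    push_cast
    rfl
  rw [beta_eq_betaIntegralReal α β hα hβ, h, Complex.ofReal_re]

lemma integral_rpow_mul_sub_rpow {α β u : ℝ} (hα : 0 < α) (hβ : 0 < β) (hu : 0 < u) :
    ∫ s in (0 : ℝ)..u, s ^ (α - 1) * (u - s) ^ (β - 1) = u ^ (α + β - 1) * beta α β := by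
  have hscale := intervalIntegral.smul_integral_comp_mul_left
    (fun s => s ^ (α - 1) * (u - s) ^ (β - 1)) u (a := 0) (b := 1)
  rw [mul_zero, mul_one] at hscale
  rw [← hscale, ← integral_rpow_mul_one_sub_rpow hα hβ, smul_eq_mul,
    ← intervalIntegral.integral_const_mul, ← intervalIntegral.integral_const_mul]
  refine intervalIntegral.integral_congr fun x hx => ?_
  rw [uIcc_of_le zero_le_one] at hx
  rw [show u - u * x = u * (1 - x) by ring, mul_rpow hu.le hx.1,
    mul_rpow hu.le (sub_nonneg.2 hx.2),
    show α + β - 1 = 1 + (α - 1) + (β - 1) by ring, rpow_add hu, rpow_add hu, rpow_one]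
  ring

lemma lintegral_Ioo_mul_lintegral_Ioo_sub {F G : ℝ → ℝ≥0∞} (hF : Measurable F)
    (hG : Measurable G) (t : ℝ) :
    ∫⁻ s in Ioo 0 t, F s * ∫⁻ v in Ioo 0 (t - s), G v
      = ∫⁻ u in Ioo 0 t, ∫⁻ s in Ioo 0 u, F s * G (u - s) := by
  set T : ℝ → ℝ → ℝ≥0∞ := fun s u => if s < u then F s * G (u - s) else 0
  have hT : Measurable (Function.uncurry T) :=
    Measurable.ite (measurableSet_lt measurable_fst measurable_snd)
      ((hF.comp measurable_fst).mul (hG.comp (measurable_snd.sub measurable_fst)))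
      measurable_const
  calc ∫⁻ s in Ioo 0 t, F s * ∫⁻ v in Ioo 0 (t - s), G v
      = ∫⁻ s in Ioo 0 t, ∫⁻ u in Ioo 0 t, T s u := by
        refine setLIntegral_congr_fun measurableSet_Ioo fun s hs => ?_
        have hIoo : Ioo s t = Ioi s ∩ Ioo 0 t := by
          rw [inter_comm, Ioo_inter_Ioi, max_eq_right hs.1.le]
        rw [← (measurePreserving_sub_right volume s).setLIntegral_comp_preimage
          measurableSet_Ioo hG, preimage_sub_const_Ioo, zero_add, sub_add_cancel,
          ← lintegral_const_mul _ (by fun_prop : Measurable fun u => G (u - s)),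
          hIoo,
          ← setLIntegral_indicator measurableSet_Ioi]
        rfl
    _ = ∫⁻ u in Ioo 0 t, ∫⁻ s in Ioo 0 t, T s u := lintegral_lintegral_swap hT.aemeasurable
    _ = ∫⁻ u in Ioo 0 t, ∫⁻ s in Ioo 0 u, F s * G (u - s) := by
        refine setLIntegral_congr_fun measurableSet_Ioo fun u hu => ?_
        have hIoo : Ioo 0 u = Iio u ∩ Ioo 0 t := by
          rw [inter_comm, Ioo_inter_Iio, min_eq_right hu.2.le]
        rw [hIoo, ← setLIntegral_indicator measurableSet_Iio]
        rfl

lemma integral_comp_eq_setIntegral_of_map_eq_withDensity {Ω : Type*} [MeasurableSpace Ω]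
    {μ : Measure Ω} {g : Ω → ℝ} (hg : Measurable g) {A : Set ℝ} (hA : MeasurableSet A)
    {ρ f : ℝ → ℝ} (hρ : Measurable ρ) (hρ_nonneg : ∀ x ∈ A, 0 ≤ ρ x)
    (hf : Measurable f)
    (hlaw : μ.map g = volume.withDensity (A.indicator fun x => ENNReal.ofReal (ρ x))) :
    ∫ ω, f (g ω) ∂μ = ∫ x in A, ρ x * f x := by
  rw [← integral_map hg.aemeasurable hf.aestronglyMeasurable, hlaw,
    integral_withDensity_eq_integral_toReal_smul (hρ.ennreal_ofReal.indicator hA)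
      (ae_of_all _ fun x => by by_cases hx : x ∈ A <;> simp [hx]), ← integral_indicator hA]
  congr with x
  by_cases hx : x ∈ A <;> simp [hx, hρ_nonneg]

lemma natCast_mul_integral_pow_sub_one_mul_exp (c t : ℝ) {k : ℕ} (hk : 1 ≤ k) :
    k * ∫ u in (0 : ℝ)..t, u ^ (k - 1) * exp (-c * u)
      = t ^ k * exp (-c * t) + c * ∫ u in (0 : ℝ)..t, u ^ k * exp (-c * u) := by
  have hderiv : ∀ u ∈ uIcc 0 t, HasDerivAt (fun u => u ^ k * exp (-c * u))
      (k * (u ^ (k - 1) * exp (-c * u)) - c * (u ^ k * exp (-c * u))) u := by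
    intro u _
    have := (hasDerivAt_pow k u).mul ((hasDerivAt_id u).const_mul (-c)).exp
    refine this.congr_deriv ?_
    simp only [id]
    ring
  have hFTC := intervalIntegral.integral_eq_sub_of_hasDerivAt hderiv
    (by apply Continuous.intervalIntegrable; fun_prop)
  rw [intervalIntegral.integral_sub (by apply Continuous.intervalIntegrable; fun_prop)
    (by apply Continuous.intervalIntegrable; fun_prop), intervalIntegral.integral_const_mul,
    intervalIntegral.integral_const_mul, zero_pow (by omega), zero_mul, sub_zero] at hFTC
  linarith

/-- `barrierDensity b v = φ(b√v)/√v` is the density of `W_v` at the barrier point `b v`. -/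
noncomputable def barrierDensity (b v : ℝ) : ℝ := exp (-(b ^ 2 / 2) * v) / (√(2 * π) * √v)

lemma barrierDensity_nonneg (b v : ℝ) : 0 ≤ barrierDensity b v := by
  unfold barrierDensity; positivity

@[fun_prop]
lemma measurable_barrierDensity (b : ℝ) : Measurable (barrierDensity b) := by
  unfold barrierDensity; fun_prop

lemma stdNormalPdf_mul_sqrt_div_sqrt (b : ℝ) {v : ℝ} (hv : 0 ≤ v) :
    stdNormalPdf (b * √v) / √v = barrierDensity b v := by
  rw [stdNormalPdf, barrierDensity, mul_pow, sq_sqrt hv,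
    show -(b ^ 2 * v) / 2 = -(b ^ 2 / 2) * v by ring]
  field_simp

lemma barrierDensity_le (b : ℝ) {v : ℝ} (hv : 0 < v) :
    barrierDensity b v ≤ (√(2 * π))⁻¹ * v ^ (-(1 / 2) : ℝ) := by
  have hexp : exp (-(b ^ 2 / 2) * v) ≤ 1 := exp_le_one_iff.2 (by nlinarith [sq_nonneg b])
  rw [rpow_neg hv.le, ← sqrt_eq_rpow, ← mul_inv, ← one_div]
  unfold barrierDensity
  gcongr

lemma integrableOn_barrierDensity (b w : ℝ) : IntegrableOn (barrierDensity b) (Ioo 0 w) := by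
  rcases le_or_gt w 0 with hw | hw
  · simp [Ioo_eq_empty_of_le hw]
  have h_rpow : IntegrableOn (fun v : ℝ => (√(2 * π))⁻¹ * v ^ (-(1 / 2) : ℝ)) (Ioo 0 w) := by
    have := intervalIntegral.intervalIntegrable_rpow' (r := -(1 / 2)) (by norm_num)
      (a := 0) (b := w)
    rw [intervalIntegrable_iff_integrableOn_Ioo_of_le hw.le] at this
    exact this.const_mul _
  refine h_rpow.mono' (measurable_barrierDensity b).aestronglyMeasurable ?_
  filter_upwards [ae_restrict_mem measurableSet_Ioo] with v hv
  rw [norm_of_nonneg (barrierDensity_nonneg b v)]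
  exact barrierDensity_le b hv.1

lemma two_mul_stdNormalCdf_sub (b : ℝ) {w : ℝ} (hw : 0 ≤ w) :
    2 * b * stdNormalCdf (b * √w) - b = b ^ 2 * ∫ v in Ioo 0 w, barrierDensity b v := by
  have hderiv : ∀ v ∈ Ioo 0 w, HasDerivAt (fun v => 2 * b * stdNormalCdf (b * √v) - b)
      (b ^ 2 * barrierDensity b v) v := by
    intro v hv
    have h_inner := (hasDerivAt_sqrt hv.1.ne').const_mul b
    refine ((((hasDerivAt_stdNormalCdf _).comp v h_inner).const_mul (2 * b)).sub_const b
      ).congr_deriv ?_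
    rw [← stdNormalPdf_mul_sqrt_div_sqrt b hv.1.le]
    field_simp
  have hint : IntervalIntegrable (fun v => b ^ 2 * barrierDensity b v) volume 0 w := by
    rw [intervalIntegrable_iff_integrableOn_Ioo_of_le hw]
    exact (integrableOn_barrierDensity b w).const_mul _
  have hFTC := intervalIntegral.integral_eq_sub_of_hasDeriv_right_of_le hw (by fun_prop)
    (fun v hv => (hderiv v hv).hasDerivWithinAt) hint
  rw [intervalIntegral.integral_of_le hw, integral_Ioc_eq_integral_Ioo, integral_const_mul,
    sqrt_zero, mul_zero, stdNormalCdf_zero] at hFTC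
  linarith

lemma pow_mul_barrierDensity_mul_barrierDensity_sub (b : ℝ) (k : ℕ) {s u : ℝ} (hs : 0 < s)
    (hsu : s < u) :
    s ^ k * barrierDensity b s * barrierDensity b (u - s)
      = exp (-(b ^ 2 / 2) * u) / (2 * π)
          * (s ^ ((k + 1 / 2 : ℝ) - 1) * (u - s) ^ ((1 / 2 : ℝ) - 1)) := by
  have hus : 0 < u - s := sub_pos.2 hsu
  have hexp : exp (-(b ^ 2 / 2) * s) * exp (-(b ^ 2 / 2) * (u - s)) = exp (-(b ^ 2 / 2) * u) := by
    rw [← exp_add]; ring_nf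
  rw [show (k + 1 / 2 : ℝ) - 1 = k + -(1 / 2) by ring, show (1 / 2 : ℝ) - 1 = -(1 / 2) by ring,
    rpow_add hs, rpow_natCast, rpow_neg hs.le, rpow_neg hus.le, ← sqrt_eq_rpow, ← sqrt_eq_rpow,
    barrierDensity, barrierDensity, ← hexp]
  have := sqrt_pos.2 hs
  have := sqrt_pos.2 hus
  field_simp
  rw [sq_sqrt (by positivity)]

lemma lintegral_pow_mul_barrierDensity_conv (b : ℝ) (k : ℕ) {u : ℝ} (hu : 0 < u) :
    ∫⁻ s in Ioo 0 u, ENNReal.ofReal (s ^ k * barrierDensity b s)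
        * ENNReal.ofReal (barrierDensity b (u - s))
      = ENNReal.ofReal
          (Gamma (k + 1 / 2) / (2 * √π * k !) * (u ^ k * exp (-(b ^ 2 / 2) * u))) := by
  set B := fun s : ℝ => s ^ ((k + 1 / 2 : ℝ) - 1) * (u - s) ^ ((1 / 2 : ℝ) - 1)
  have hα : (0 : ℝ) < k + 1 / 2 := by positivity
  have hbeta := integral_rpow_mul_sub_rpow hα one_half_pos hu
  have hB : IntegrableOn B (Ioo 0 u) := by
    rw [← intervalIntegrable_iff_integrableOn_Ioo_of_le hu.le]
    refine intervalIntegral.intervalIntegrable_of_integral_ne_zero ?_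
    rw [hbeta]
    exact (mul_pos (rpow_pos_of_pos hu _) (beta_pos hα one_half_pos)).ne'
  calc ∫⁻ s in Ioo 0 u, ENNReal.ofReal (s ^ k * barrierDensity b s)
        * ENNReal.ofReal (barrierDensity b (u - s))
      = ∫⁻ s in Ioo 0 u, ENNReal.ofReal (exp (-(b ^ 2 / 2) * u) / (2 * π) * B s) := by
        refine setLIntegral_congr_fun measurableSet_Ioo fun s hs => ?_
        have := barrierDensity_nonneg b s
        rw [← ENNReal.ofReal_mul (by have := hs.1.le; positivity),
          pow_mul_barrierDensity_mul_barrierDensity_sub b k hs.1 hs.2]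
    _ = ENNReal.ofReal (∫ s in Ioo 0 u, exp (-(b ^ 2 / 2) * u) / (2 * π) * B s) := by
        refine (ofReal_integral_eq_lintegral_ofReal (hB.const_mul _) ?_).symm
        filter_upwards [ae_restrict_mem measurableSet_Ioo] with s hs
        have := sub_pos.2 hs.2
        have := hs.1
        positivity
    _ = _ := by
        rw [integral_const_mul, ← integral_Ioc_eq_integral_Ioo,
          ← intervalIntegral.integral_of_le hu.le, hbeta, beta,
          show (k + 1 / 2 : ℝ) + 1 / 2 = k + 1 by ring, Gamma_nat_eq_factorial, Gamma_one_half_eq,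
          show (k + 1 : ℝ) - 1 = k by ring, rpow_natCast]
        have := sqrt_pos.2 pi_pos
        congr 1
        field_simp
        exact sq_sqrt pi_pos.le

noncomputable def lastPassageDensity (b t s : ℝ) : ℝ :=
  stdNormalPdf (b * √s) / √s *
    (2 / √(t - s) * stdNormalPdf (b * √(t - s)) + 2 * b * stdNormalCdf (b * √(t - s)) - b)

@[fun_prop]
lemma measurable_lastPassageDensity (b t : ℝ) : Measurable (lastPassageDensity b t) := by
  unfold lastPassageDensity
  fun_prop

lemma lastPassageDensity_eq (b : ℝ) {t s : ℝ} (hs : s ∈ Ioo 0 t) :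
    lastPassageDensity b t s = barrierDensity b s
      * (2 * barrierDensity b (t - s) + b ^ 2 * ∫ v in Ioo 0 (t - s), barrierDensity b v) := by
  have hts : 0 < t - s := sub_pos.2 hs.2
  rw [lastPassageDensity, add_sub_assoc, two_mul_stdNormalCdf_sub b hts.le,
    stdNormalPdf_mul_sqrt_div_sqrt b hs.1.le, ← stdNormalPdf_mul_sqrt_div_sqrt b hts.le]
  ring

lemma lastPassageDensity_nonneg (b : ℝ) {t s : ℝ} (hs : s ∈ Ioo 0 t) :
    0 ≤ lastPassageDensity b t s := by
  have : 0 ≤ ∫ v in Ioo 0 (t - s), barrierDensity b v :=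
    setIntegral_nonneg measurableSet_Ioo fun v _ => barrierDensity_nonneg b v
  rw [lastPassageDensity_eq b hs]
  have := barrierDensity_nonneg b s
  have := barrierDensity_nonneg b (t - s)
  positivity

lemma ofReal_lastPassageDensity_mul_pow (b : ℝ) {t s : ℝ} (hs : s ∈ Ioo 0 t) (k : ℕ) :
    ENNReal.ofReal (lastPassageDensity b t s * s ^ k)
      = 2 * (ENNReal.ofReal (s ^ k * barrierDensity b s)
          * ENNReal.ofReal (barrierDensity b (t - s)))
        + ENNReal.ofReal (b ^ 2) * (ENNReal.ofReal (s ^ k * barrierDensity b s)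
          * ∫⁻ v in Ioo 0 (t - s), ENNReal.ofReal (barrierDensity b v)) := by
  have hP : 0 ≤ s ^ k * barrierDensity b s :=
    mul_nonneg (pow_nonneg hs.1.le k) (barrierDensity_nonneg b s)
  have hI : 0 ≤ ∫ v in Ioo 0 (t - s), barrierDensity b v :=
    setIntegral_nonneg measurableSet_Ioo fun v _ => barrierDensity_nonneg b v
  have := barrierDensity_nonneg b (t - s)
  have hreal : lastPassageDensity b t s * s ^ k
      = 2 * (s ^ k * barrierDensity b s * barrierDensity b (t - s))
        + b ^ 2 * (s ^ k * barrierDensity b s * ∫ v in Ioo 0 (t - s), barrierDensity b v) := by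
    rw [lastPassageDensity_eq b hs]
    ring
  rw [hreal, ENNReal.ofReal_add (by positivity) (by positivity), ENNReal.ofReal_mul zero_le_two,
    ENNReal.ofReal_ofNat, ENNReal.ofReal_mul hP, ENNReal.ofReal_mul (sq_nonneg b),
    ENNReal.ofReal_mul hP, ofReal_integral_eq_lintegral_ofReal
      (integrableOn_barrierDensity b (t - s)) (ae_of_all _ (barrierDensity_nonneg b))]

lemma lintegral_lastPassageDensity_mul_pow (b : ℝ) {t : ℝ} (ht : 0 < t) (k : ℕ) :
    ∫⁻ s in Ioo 0 t, ENNReal.ofReal (lastPassageDensity b t s * s ^ k)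
      = ENNReal.ofReal (Gamma (k + 1 / 2) / (2 * √π * k !)
          * (2 * (t ^ k * exp (-(b ^ 2 / 2) * t))
            + b ^ 2 * ∫ u in (0 : ℝ)..t, u ^ k * exp (-(b ^ 2 / 2) * u))) := by
  set C := Gamma (k + 1 / 2) / (2 * √π * k !)
  set E := fun u : ℝ => u ^ k * exp (-(b ^ 2 / 2) * u)
  set P := fun s : ℝ => ENNReal.ofReal (s ^ k * barrierDensity b s)
  set H := fun v : ℝ => ENNReal.ofReal (barrierDensity b v)
  have hCE : ∀ u, 0 ≤ u → 0 ≤ C * E u := fun u hu => by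
    have := Gamma_pos_of_pos (by positivity : (0 : ℝ) < k + 1 / 2)
    positivity
  have hCE_int : IntegrableOn (fun u => C * E u) (Ioo 0 t) :=
    ((by fun_prop : Continuous fun u => C * E u).integrableOn_Icc).mono_set Ioo_subset_Icc_self
  calc ∫⁻ s in Ioo 0 t, ENNReal.ofReal (lastPassageDensity b t s * s ^ k)
      = 2 * (∫⁻ s in Ioo 0 t, P s * H (t - s))
        + ENNReal.ofReal (b ^ 2) * ∫⁻ s in Ioo 0 t, P s * ∫⁻ v in Ioo 0 (t - s), H v := by
        rw [setLIntegral_congr_fun measurableSet_Ioo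
            fun s hs => ofReal_lastPassageDensity_mul_pow b hs k,
          lintegral_add_left (by fun_prop), lintegral_const_mul' _ _ (by simp),
          lintegral_const_mul' _ _ ENNReal.ofReal_ne_top]
    _ = 2 * ENNReal.ofReal (C * E t)
        + ENNReal.ofReal (b ^ 2) * ∫⁻ u in Ioo 0 t, ENNReal.ofReal (C * E u) := by
        rw [lintegral_pow_mul_barrierDensity_conv b k ht,
          lintegral_Ioo_mul_lintegral_Ioo_sub (by fun_prop) (by fun_prop),
          setLIntegral_congr_fun measurableSet_Ioo
            fun u hu => lintegral_pow_mul_barrierDensity_conv b k hu.1]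
    _ = ENNReal.ofReal (C * (2 * E t + b ^ 2 * ∫ u in (0 : ℝ)..t, E u)) := by
        rw [← ofReal_integral_eq_lintegral_ofReal hCE_int
            (ae_restrict_of_forall_mem measurableSet_Ioo fun u hu => hCE u hu.1.le),
          ← ENNReal.ofReal_ofNat 2, ← ENNReal.ofReal_mul zero_le_two,
          ← ENNReal.ofReal_mul (sq_nonneg b),
          ← ENNReal.ofReal_add (mul_nonneg zero_le_two (hCE t ht.le)) (mul_nonneg (sq_nonneg b)
            (setIntegral_nonneg measurableSet_Ioo fun u hu => hCE u hu.1.le)),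
          integral_const_mul, ← integral_Ioc_eq_integral_Ioo,
          ← intervalIntegral.integral_of_le ht.le]
        congr 1
        ring

lemma setIntegral_lastPassageDensity_mul_pow (b : ℝ) {t : ℝ} (ht : 0 < t) {k : ℕ}
    (hk : 1 ≤ k) :
    ∫ s in Ioo 0 t, lastPassageDensity b t s * s ^ k
      = Gamma (k + 1 / 2) / (√π * (k - 1)!)
          * ∫ u in (0 : ℝ)..t, u ^ (k - 1) * exp (-b ^ 2 / 2 * u) := by
  have hΓ := Gamma_pos_of_pos (by positivity : (0 : ℝ) < k + 1 / 2)
  have hE : 0 ≤ ∫ u in (0 : ℝ)..t, u ^ k * exp (-(b ^ 2 / 2) * u) :=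
    intervalIntegral.integral_nonneg ht.le fun u hu => by have := hu.1; positivity
  have hfact : (k ! : ℝ) = k * (k - 1)! := by
    rw [← Nat.cast_mul, Nat.mul_factorial_pred (by omega)]
  have hconst : Gamma (k + 1 / 2) / (√π * (k - 1)!)
      = 2 * k * (Gamma (k + 1 / 2) / (2 * √π * k !)) := by
    have hk0 : (k : ℝ) ≠ 0 := by positivity
    rw [hfact]
    field_simp
  rw [integral_eq_lintegral_of_nonneg_ae
      (ae_restrict_of_forall_mem measurableSet_Ioo fun s hs =>
        mul_nonneg (lastPassageDensity_nonneg b hs) (pow_nonneg hs.1.le k))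
      (by fun_prop : Measurable fun s => lastPassageDensity b t s * s ^ k).aestronglyMeasurable,
    lintegral_lastPassageDensity_mul_pow b ht k, ENNReal.toReal_ofReal (by positivity), neg_div,
    hconst]
  linear_combination (-2 * (Gamma (k + 1 / 2) / (2 * √π * k !)))
    * natCast_mul_integral_pow_sub_one_mul_exp (b ^ 2 / 2) t hk

theorem moments_last_passage_affine_general
    {Ω : Type*} [MeasurableSpace Ω] (μ : Measure Ω)
    (b t : ℝ) (ht : 0 < t) (g : Ω → ℝ) (hg : Measurable g)
    (hlaw : μ.map g
      = volume.withDensity (fun s =>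
          Set.indicator (Set.Ioo (0 : ℝ) t)
            (fun s => ENNReal.ofReal
              (stdNormalPdf (b * Real.sqrt s) / Real.sqrt s *
                (2 / Real.sqrt (t - s) * stdNormalPdf (b * Real.sqrt (t - s))
                  + 2 * b * stdNormalCdf (b * Real.sqrt (t - s)) - b))) s)) :
    ∀ k : ℕ, 1 ≤ k →
      ∫ ω, (g ω) ^ k ∂μ
        = Real.Gamma ((k : ℝ) + 1 / 2) / (Real.sqrt Real.pi * ((k - 1).factorial : ℝ))
            * ∫ u in (0 : ℝ)..t, u ^ ((k : ℕ) - 1) * Real.exp (-b ^ 2 / 2 * u) := by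
  intro k hk
  rw [integral_comp_eq_setIntegral_of_map_eq_withDensity hg measurableSet_Ioo
    (measurable_lastPassageDensity b t) (fun s hs => lastPassageDensity_nonneg b hs)
    (f := fun x => x ^ k) (by fun_prop) hlaw]
  exact setIntegral_lastPassageDensity_mul_pow b ht hk

/-- Moments of the last passage time before `t` of a Brownian motion at the line `s ↦ bs`,
whose law on `(0,t)` has the stated density. -/
theorem moments_last_passage_affine
    {Ω : Type*} [MeasurableSpace Ω] (μ : Measure Ω) [IsProbabilityMeasure μ]
    (b t : ℝ) (ht : 0 < t) (g : Ω → ℝ) (hg : Measurable g)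
    (hlaw : μ.map g
      = volume.withDensity (fun s =>
          Set.indicator (Set.Ioo (0 : ℝ) t)
            (fun s => ENNReal.ofReal
              (stdNormalPdf (b * Real.sqrt s) / Real.sqrt s *
                (2 / Real.sqrt (t - s) * stdNormalPdf (b * Real.sqrt (t - s))
                  + 2 * b * stdNormalCdf (b * Real.sqrt (t - s)) - b))) s)) :
    ∀ k : ℕ, 1 ≤ k →
      ∫ ω, (g ω) ^ k ∂μ
        = Real.Gamma ((k : ℝ) + 1 / 2) / (Real.sqrt Real.pi * ((k - 1).factorial : ℝ))
            * ∫ u in (0 : ℝ)..t, u ^ ((k : ℕ) - 1) * Real.exp (-b ^ 2 / 2 * u) :=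
  moments_last_passage_affine_general μ b t ht g hg hlaw
end

section
/- For $x,y\in\mathbb{R}$ with $y\neq 0$ and $t>0$, $\int_0^t \frac{1}{\sqrt{2\pi s}}e^{-x^2/(2s)}\cdot\frac{|y|}{\sqrt{2\pi}(t-s)^{3/2}}e^{-y^2/(2(t-s))}\,ds = \frac{1}{\sqrt{2\pi t}}e^{-(|x|+|y|)^2/(2t)}$. -/
open MeasureTheory Real Set Filter Topology

noncomputable def gaussG (v : ℝ) : ℝ := ∫ u in Set.Iic v, Real.exp (-u ^ 2 / 2)

lemma gauss_exp_eq : (fun u : ℝ => Real.exp (-u ^ 2 / 2)) = fun u : ℝ => Real.exp (-(1/2) * u ^ 2) := by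
  funext u; congr 1; ring

lemma gauss_cont : Continuous (fun u : ℝ => Real.exp (-u ^ 2 / 2)) := by
  rw [gauss_exp_eq]; exact Continuous.rexp (by continuity)

lemma gauss_integrable : Integrable (fun u : ℝ => Real.exp (-u ^ 2 / 2)) := by
  rw [gauss_exp_eq]; exact integrable_exp_neg_mul_sq (by norm_num)

lemma gauss_total : ∫ u : ℝ, Real.exp (-u ^ 2 / 2) = Real.sqrt (2 * π) := by
  have h := integral_gaussian (1/2 : ℝ)
  rw [show π / (1/2 : ℝ) = 2 * π by ring] at h
  rw [← h]
  congr 1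
  funext u
  congr 1
  ring

lemma gaussG_hasDerivAt (v : ℝ) : HasDerivAt gaussG (Real.exp (-v ^ 2 / 2)) v := by
  have hint : ∀ w : ℝ, IntegrableOn (fun u : ℝ => Real.exp (-u ^ 2 / 2)) (Iic w) :=
    fun w => gauss_integrable.integrableOn
  have heq : ∀ w : ℝ, gaussG w = gaussG 0 + ∫ u in (0:ℝ)..w, Real.exp (-u ^ 2 / 2) := by
    intro w
    have := intervalIntegral.integral_Iic_sub_Iic (hint 0) (hint w)
    simp only [gaussG]
    linarith [this]
  have hd : HasDerivAt (fun w => gaussG 0 + ∫ u in (0:ℝ)..w, Real.exp (-u ^ 2 / 2))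
      (Real.exp (-v ^ 2 / 2)) v := by
    refine HasDerivAt.const_add _ ?_
    refine intervalIntegral.integral_hasDerivAt_right
      (gauss_cont.intervalIntegrable _ _) ?_ gauss_cont.continuousAt
    exact gauss_cont.stronglyMeasurable.stronglyMeasurableAtFilter
  exact hd.congr_of_eventuallyEq (Eventually.of_forall heq)

lemma gaussG_atTop : Tendsto gaussG atTop (𝓝 (Real.sqrt (2 * π))) := by
  rw [← gauss_total]
  exact (aecover_Iic tendsto_id (μ := volume) (l := atTop)).integral_tendsto_of_countably_generated gauss_integrable

lemma gaussG_atBot : Tendsto gaussG atBot (𝓝 0) := by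
  have h1 : Tendsto (fun v : ℝ => ∫ u in Ioi v, Real.exp (-u ^ 2 / 2)) atBot
      (𝓝 (∫ u : ℝ, Real.exp (-u ^ 2 / 2))) :=
    (aecover_Ioi tendsto_id (μ := volume) (l := atBot)).integral_tendsto_of_countably_generated gauss_integrable
  have h2 : ∀ v : ℝ, gaussG v = (∫ u : ℝ, Real.exp (-u ^ 2 / 2)) - ∫ u in Ioi v, Real.exp (-u ^ 2 / 2) := by
    intro v
    have := intervalIntegral.integral_Iic_add_Ioi (b := v) gauss_integrable.integrableOn gauss_integrable.integrableOn
    simp only [gaussG]; linarith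
  have h3 : Tendsto (fun v : ℝ => (∫ u : ℝ, Real.exp (-u ^ 2 / 2)) - ∫ u in Ioi v, Real.exp (-u ^ 2 / 2)) atBot (𝓝 0) := by
    simpa using (sub_self (∫ u : ℝ, Real.exp (-u ^ 2 / 2))) ▸ (tendsto_const_nhds (x := ∫ u : ℝ, Real.exp (-u ^ 2 / 2)) (f := atBot)).sub h1
  exact h3.congr fun v => (h2 v).symm

lemma my_integral_Ioo {a b la lb : ℝ} (hab : a < b) {f f' : ℝ → ℝ}
    (hderiv : ∀ s ∈ Ioo a b, HasDerivAt f (f' s) s)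
    (hcont : ContinuousOn f' (Ioo a b))
    (hnonneg : ∀ s ∈ Ioo a b, 0 ≤ f' s)
    (ha : Tendsto f (𝓝[>] a) (𝓝 la)) (hb : Tendsto f (𝓝[<] b) (𝓝 lb)) :
    ∫ s in Ioo a b, f' s = lb - la := by
  have hba : (0:ℝ) < b - a := sub_pos.2 hab
  set c : ℕ → ℝ := fun n => a + (b - a) / (n + 3) with hc_def
  set d : ℕ → ℝ := fun n => b - (b - a) / (n + 3) with hd_def
  have hfrac_pos : ∀ n : ℕ, 0 < (b - a) / ((n:ℝ) + 3) := fun n => div_pos hba (by positivity)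
  have hfrac_lt : ∀ n : ℕ, (b - a) / ((n:ℝ) + 3) < (b - a) / 2 := by
    intro n
    apply div_lt_div_of_pos_left hba (by norm_num)
    have : (0:ℝ) ≤ (n:ℝ) := Nat.cast_nonneg n
    linarith
  have hac : ∀ n, a < c n := fun n => by simp only [hc_def]; linarith [hfrac_pos n]
  have hdb : ∀ n, d n < b := fun n => by simp only [hd_def]; linarith [hfrac_pos n]
  have hcd : ∀ n, c n < d n := fun n => by
    simp only [hc_def, hd_def]; linarith [hfrac_lt n]
  have hfrac0 : Tendsto (fun n : ℕ => (b - a) / ((n:ℝ) + 3)) atTop (𝓝 0) := by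
    apply Tendsto.div_atTop (tendsto_const_nhds)
    exact tendsto_atTop_add_const_right _ 3 tendsto_natCast_atTop_atTop
  have hc : Tendsto c atTop (𝓝 a) := by
    simpa using (tendsto_const_nhds (x := a) (f := atTop (α := ℕ))).add hfrac0
  have hd : Tendsto d atTop (𝓝 b) := by
    simpa using (tendsto_const_nhds (x := b) (f := atTop (α := ℕ))).sub hfrac0
  have hc' : Tendsto c atTop (𝓝[>] a) :=
    tendsto_nhdsWithin_of_tendsto_nhds_of_eventually_within _ hc
      (Eventually.of_forall fun n => hac n)
  have hd' : Tendsto d atTop (𝓝[<] b) :=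
    tendsto_nhdsWithin_of_tendsto_nhds_of_eventually_within _ hd
      (Eventually.of_forall fun n => hdb n)
  have hsub : ∀ n, Icc (c n) (d n) ⊆ Ioo a b := fun n =>
    Icc_subset_Ioo (hac n) (hdb n)
  have hint : ∀ n, IntegrableOn f' (Icc (c n) (d n)) := fun n =>
    (hcont.mono (hsub n)).integrableOn_compact isCompact_Icc
  have key : ∀ n, ∫ s in Icc (c n) (d n), f' s = f (d n) - f (c n) := by
    intro n
    rw [MeasureTheory.integral_Icc_eq_integral_Ioc, ← intervalIntegral.integral_of_le (hcd n).le]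
    apply intervalIntegral.integral_eq_sub_of_hasDerivAt
    · intro s hs
      rw [uIcc_of_le (hcd n).le] at hs
      exact hderiv s (hsub n hs)
    · rw [intervalIntegrable_iff_integrableOn_Icc_of_le (hcd n).le]
      exact hint n
  have hφ : AECover (volume.restrict (Ioo a b)) atTop fun n => Icc (c n) (d n) :=
    aecover_Ioo_of_Icc hc hd
  have hres : ∀ n, ∫ s in Icc (c n) (d n), f' s ∂(volume.restrict (Ioo a b))
      = ∫ s in Icc (c n) (d n), f' s := by
    intro n
    rw [Measure.restrict_restrict measurableSet_Icc, inter_eq_self_of_subset_left (hsub n)]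
  have hfi : ∀ n, IntegrableOn f' (Icc (c n) (d n)) (volume.restrict (Ioo a b)) := by
    intro n
    unfold IntegrableOn
    rw [Measure.restrict_restrict measurableSet_Icc, inter_eq_self_of_subset_left (hsub n)]
    exact hint n
  have htend : Tendsto (fun n => ∫ s in Icc (c n) (d n), f' s ∂(volume.restrict (Ioo a b)))
      atTop (𝓝 (lb - la)) := by
    simp only [hres, key]
    exact (hb.comp hd').sub (ha.comp hc')
  have hnng : 0 ≤ᵐ[volume.restrict (Ioo a b)] f' :=
    (ae_restrict_iff' measurableSet_Ioo).2 (ae_of_all _ hnonneg)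
  exact hφ.integral_eq_of_tendsto_of_nonneg_ae (lb - la) hnng hfi htend

noncomputable def gg (A B t s : ℝ) : ℝ :=
  (A * (t - s) - B * s) / (Real.sqrt t * Real.sqrt s * Real.sqrt (t - s))
noncomputable def kk (B t s : ℝ) : ℝ :=
  2 * B * Real.sqrt s / (Real.sqrt t * Real.sqrt (t - s))
noncomputable def FF (A B t : ℝ) : ℝ → ℝ := fun s =>
  Real.exp (2 * A * B / t) * gaussG (gg A B t s + kk B t s) - gaussG (gg A B t s)
noncomputable def DD (A B t : ℝ) : ℝ → ℝ := fun s =>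
  Real.exp (-(gg A B t s) ^ 2 / 2) * (B * Real.sqrt t / (Real.sqrt s * (t - s) ^ ((3:ℝ)/2)))

lemma rpow_three_half {u : ℝ} (hu : 0 < u) : u ^ ((3:ℝ)/2) = u * Real.sqrt u := by
  rw [show ((3:ℝ)/2) = 1 + 1/2 by norm_num, Real.rpow_add hu, Real.rpow_one,
    ← Real.sqrt_eq_rpow]

lemma hasDerivAt_kk {B t s : ℝ} (ht : 0 < t) (hs : 0 < s) (hst : s < t) :
    HasDerivAt (kk B t) (B * Real.sqrt t / (Real.sqrt s * (t - s) ^ ((3:ℝ)/2))) s := by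
  have hts : 0 < t - s := sub_pos.2 hst
  have h1 : HasDerivAt (fun s : ℝ => Real.sqrt s) (1/(2*Real.sqrt s)) s :=
    Real.hasDerivAt_sqrt hs.ne'
  have h2 : HasDerivAt (fun s : ℝ => Real.sqrt (t - s)) (1/(2*Real.sqrt (t-s)) * (-1)) s :=
    (Real.hasDerivAt_sqrt hts.ne').comp s ((hasDerivAt_id s).const_sub t)
  have hn3 : Real.sqrt t ≠ 0 := (Real.sqrt_pos.2 ht).ne'
  have hn2 : Real.sqrt (t - s) ≠ 0 := (Real.sqrt_pos.2 hts).ne'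
  have hden : Real.sqrt t * Real.sqrt (t - s) ≠ 0 := mul_ne_zero hn3 hn2
  have h0 := (h1.const_mul (2*B)).div (h2.const_mul (Real.sqrt t)) hden
  convert h0 using 1
  · rfl
  · rfl
  · rfl
  rw [rpow_three_half hts]
  set a1 := Real.sqrt s with ha1d
  set a2 := Real.sqrt (t - s) with ha2d
  set a3 := Real.sqrt t with ha3d
  have ha1 : a1 ^ 2 = s := Real.sq_sqrt hs.le
  have ha2 : a2 ^ 2 = t - s := Real.sq_sqrt hts.le
  have ha3 : a3 ^ 2 = t := Real.sq_sqrt ht.le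
  have hn1 : a1 ≠ 0 := (Real.sqrt_pos.2 hs).ne'
  have hrel : a3 ^ 2 = a1 ^ 2 + a2 ^ 2 := by rw [ha1, ha2, ha3]; ring
  rw [show t - s = a2 ^ 2 from ha2.symm]
  field_simp
  ring_nf
  linear_combination B * hrel

lemma gg_add_kk_sq {A B t s : ℝ} (ht : 0 < t) (hs : 0 < s) (hst : s < t) :
    (gg A B t s + kk B t s) ^ 2 = gg A B t s ^ 2 + 4 * A * B / t := by
  have hts : 0 < t - s := sub_pos.2 hst
  unfold gg kk
  set a1 := Real.sqrt s with ha1d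
  set a2 := Real.sqrt (t - s) with ha2d
  set a3 := Real.sqrt t with ha3d
  have ha1 : a1 ^ 2 = s := Real.sq_sqrt hs.le
  have ha2 : a2 ^ 2 = t - s := Real.sq_sqrt hts.le
  have ha3 : a3 ^ 2 = t := Real.sq_sqrt ht.le
  have hn1 : a1 ≠ 0 := (Real.sqrt_pos.2 hs).ne'
  have hn2 : a2 ≠ 0 := (Real.sqrt_pos.2 hts).ne'
  have hn3 : a3 ≠ 0 := (Real.sqrt_pos.2 ht).ne'
  rw [show t - s = a2 ^ 2 from ha2.symm, show s = a1 ^ 2 from ha1.symm,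
    show t = a3 ^ 2 from ha3.symm]
  field_simp
  ring

lemma hasDerivAt_FF {A B t s : ℝ} (ht : 0 < t) (hs : 0 < s) (hst : s < t) :
    HasDerivAt (FF A B t) (DD A B t s) s := by
  have hts : 0 < t - s := sub_pos.2 hst
  have h1 : HasDerivAt (fun s : ℝ => Real.sqrt s) (1/(2*Real.sqrt s)) s :=
    Real.hasDerivAt_sqrt hs.ne'
  have h2 : HasDerivAt (fun s : ℝ => Real.sqrt (t - s)) (1/(2*Real.sqrt (t-s)) * (-1)) s :=
    (Real.hasDerivAt_sqrt hts.ne').comp s ((hasDerivAt_id s).const_sub t)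
  have hn1 : Real.sqrt s ≠ 0 := (Real.sqrt_pos.2 hs).ne'
  have hn2 : Real.sqrt (t - s) ≠ 0 := (Real.sqrt_pos.2 hts).ne'
  have hn3 : Real.sqrt t ≠ 0 := (Real.sqrt_pos.2 ht).ne'
  have hden : Real.sqrt t * Real.sqrt s * Real.sqrt (t - s) ≠ 0 :=
    mul_ne_zero (mul_ne_zero hn3 hn1) hn2
  have hnum : HasDerivAt (fun s : ℝ => A * (t - s) - B * s) (A * (-1) - B * 1) s :=
    (((hasDerivAt_id s).const_sub t).const_mul A).sub ((hasDerivAt_id s).const_mul B)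
  have hdenD : HasDerivAt (fun s : ℝ => Real.sqrt t * Real.sqrt s * Real.sqrt (t - s))
      ((Real.sqrt t * (1/(2*Real.sqrt s))) * Real.sqrt (t-s)
        + (Real.sqrt t * Real.sqrt s) * (1/(2*Real.sqrt (t-s)) * (-1))) s :=
    ((h1.const_mul (Real.sqrt t)).mul h2)
  set dgv := ((A * (-1) - B * 1) * (Real.sqrt t * Real.sqrt s * Real.sqrt (t - s)) -
      (A * (t - s) - B * s) * ((Real.sqrt t * (1/(2*Real.sqrt s))) * Real.sqrt (t-s)
        + (Real.sqrt t * Real.sqrt s) * (1/(2*Real.sqrt (t-s)) * (-1)))) /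
      (Real.sqrt t * Real.sqrt s * Real.sqrt (t - s)) ^ 2 with hdgv
  set dkv := B * Real.sqrt t / (Real.sqrt s * (t - s) ^ ((3:ℝ)/2)) with hdkv
  have hg : HasDerivAt (gg A B t) dgv s := hnum.div hdenD hden
  have hk : HasDerivAt (kk B t) dkv s := hasDerivAt_kk ht hs hst
  have hGk := ((gaussG_hasDerivAt (gg A B t s + kk B t s)).comp s (hg.add hk)).const_mul
    (Real.exp (2 * A * B / t))
  have hGg := (gaussG_hasDerivAt (gg A B t s)).comp s hg
  have hF := hGk.sub hGg
  have hFF : HasDerivAt (FF A B t)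
      (Real.exp (2 * A * B / t) * (Real.exp (-(gg A B t s + kk B t s) ^ 2 / 2) * (dgv + dkv))
        - Real.exp (-(gg A B t s) ^ 2 / 2) * dgv) s := hF
  convert hFF using 1
  have hexp : Real.exp (2 * A * B / t) * Real.exp (-(gg A B t s + kk B t s) ^ 2 / 2)
      = Real.exp (-(gg A B t s) ^ 2 / 2) := by
    rw [← Real.exp_add]
    congr 1
    rw [gg_add_kk_sq ht hs hst]
    field_simp
    ring
  show Real.exp (-(gg A B t s) ^ 2 / 2) * dkv = _
  linear_combination (-(dgv + dkv)) * hexp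

lemma gg_add_kk_eq {A B t s : ℝ} (ht : 0 < t) (hs : 0 < s) (hst : s < t) :
    gg A B t s + kk B t s
      = (A * (t - s) + B * s) / (Real.sqrt t * Real.sqrt s * Real.sqrt (t - s)) := by
  have hts : 0 < t - s := sub_pos.2 hst
  unfold gg kk
  set a1 := Real.sqrt s with ha1d
  set a2 := Real.sqrt (t - s) with ha2d
  set a3 := Real.sqrt t with ha3d
  have ha1 : a1 ^ 2 = s := Real.sq_sqrt hs.le
  have hn1 : a1 ≠ 0 := (Real.sqrt_pos.2 hs).ne'
  have hn2 : a2 ≠ 0 := (Real.sqrt_pos.2 hts).ne'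
  have hn3 : a3 ≠ 0 := (Real.sqrt_pos.2 ht).ne'
  rw [show s = a1 ^ 2 from ha1.symm]
  field_simp
  ring

lemma den_cont {t : ℝ} :
    Continuous (fun s : ℝ => Real.sqrt t * Real.sqrt s * Real.sqrt (t - s)) :=
  (continuous_const.mul Real.continuous_sqrt).mul
    (Real.continuous_sqrt.comp (continuous_const.sub continuous_id))

lemma den_tendsto_zero_right {t : ℝ} (ht : 0 < t) :
    Tendsto (fun s : ℝ => Real.sqrt t * Real.sqrt s * Real.sqrt (t - s)) (𝓝[<] t) (𝓝[>] 0) := by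
  apply tendsto_nhdsWithin_of_tendsto_nhds_of_eventually_within
  · have h := (den_cont (t := t)).continuousAt (x := t) |>.tendsto
    simp only [sub_self, Real.sqrt_zero, mul_zero] at h
    exact h.mono_left nhdsWithin_le_nhds
  · filter_upwards [Ioo_mem_nhdsLT ht] with s hs
    have h1 : (0:ℝ) < s := hs.1
    have h2 : s < t := hs.2
    have : 0 < Real.sqrt t * Real.sqrt s * Real.sqrt (t - s) := by
      apply mul_pos (mul_pos (Real.sqrt_pos.2 ht) (Real.sqrt_pos.2 h1))
        (Real.sqrt_pos.2 (sub_pos.2 h2))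
    exact this

lemma den_tendsto_zero_left {t : ℝ} (ht : 0 < t) :
    Tendsto (fun s : ℝ => Real.sqrt t * Real.sqrt s * Real.sqrt (t - s)) (𝓝[>] 0) (𝓝[>] 0) := by
  apply tendsto_nhdsWithin_of_tendsto_nhds_of_eventually_within
  · have h := (den_cont (t := t)).continuousAt (x := 0) |>.tendsto
    simp only [Real.sqrt_zero, mul_zero, zero_mul] at h
    exact h.mono_left nhdsWithin_le_nhds
  · filter_upwards [Ioo_mem_nhdsGT ht] with s hs
    exact mul_pos (mul_pos (Real.sqrt_pos.2 ht) (Real.sqrt_pos.2 hs.1))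
      (Real.sqrt_pos.2 (sub_pos.2 hs.2))

lemma gg_tendsto_atBot {A B t : ℝ} (hB : 0 < B) (ht : 0 < t) :
    Tendsto (gg A B t) (𝓝[<] t) atBot := by
  have hnum : Tendsto (fun s : ℝ => A * (t - s) - B * s) (𝓝[<] t) (𝓝 (-(B * t))) := by
    have h : Tendsto (fun s : ℝ => A * (t - s) - B * s) (𝓝 t) (𝓝 (A * (t - t) - B * t)) :=
      (Continuous.tendsto (by continuity) t)
    simpa using h.mono_left nhdsWithin_le_nhds
  have hinv : Tendsto (fun s : ℝ => (Real.sqrt t * Real.sqrt s * Real.sqrt (t - s))⁻¹)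
      (𝓝[<] t) atTop := (den_tendsto_zero_right ht).inv_tendsto_nhdsGT_zero
  have := hnum.neg_mul_atTop (by nlinarith : -(B * t) < 0) hinv
  exact this.congr fun s => by rw [gg, div_eq_mul_inv]

lemma hh_tendsto_atTop_right {A B t : ℝ} (hA : 0 ≤ A) (hB : 0 < B) (ht : 0 < t) :
    Tendsto (fun s => gg A B t s + kk B t s) (𝓝[<] t) atTop := by
  have hnum : Tendsto (fun s : ℝ => A * (t - s) + B * s) (𝓝[<] t) (𝓝 (B * t)) := by
    have h : Tendsto (fun s : ℝ => A * (t - s) + B * s) (𝓝 t) (𝓝 (A * (t - t) + B * t)) :=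
      (Continuous.tendsto (by continuity) t)
    simpa using h.mono_left nhdsWithin_le_nhds
  have hinv : Tendsto (fun s : ℝ => (Real.sqrt t * Real.sqrt s * Real.sqrt (t - s))⁻¹)
      (𝓝[<] t) atTop := (den_tendsto_zero_right ht).inv_tendsto_nhdsGT_zero
  have h0 := hnum.pos_mul_atTop (by nlinarith : (0:ℝ) < B * t) hinv
  apply h0.congr'
  filter_upwards [Ioo_mem_nhdsLT ht] with s hs
  rw [gg_add_kk_eq ht hs.1 hs.2, div_eq_mul_inv]

lemma gg_tendsto_atTop_left {A B t : ℝ} (hA : 0 < A) (hB : 0 < B) (ht : 0 < t) :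
    Tendsto (gg A B t) (𝓝[>] 0) atTop := by
  have hnum : Tendsto (fun s : ℝ => A * (t - s) - B * s) (𝓝[>] 0) (𝓝 (A * t)) := by
    have h : Tendsto (fun s : ℝ => A * (t - s) - B * s) (𝓝 0) (𝓝 (A * (t - 0) - B * 0)) :=
      (Continuous.tendsto (by continuity) 0)
    simpa using h.mono_left nhdsWithin_le_nhds
  have hinv : Tendsto (fun s : ℝ => (Real.sqrt t * Real.sqrt s * Real.sqrt (t - s))⁻¹)
      (𝓝[>] 0) atTop := (den_tendsto_zero_left ht).inv_tendsto_nhdsGT_zero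
  have h0 := hnum.pos_mul_atTop (by nlinarith : (0:ℝ) < A * t) hinv
  exact h0.congr fun s => by rw [gg, div_eq_mul_inv]

lemma hh_tendsto_atTop_left {A B t : ℝ} (hA : 0 < A) (hB : 0 < B) (ht : 0 < t) :
    Tendsto (fun s => gg A B t s + kk B t s) (𝓝[>] 0) atTop := by
  have hnum : Tendsto (fun s : ℝ => A * (t - s) + B * s) (𝓝[>] 0) (𝓝 (A * t)) := by
    have h : Tendsto (fun s : ℝ => A * (t - s) + B * s) (𝓝 0) (𝓝 (A * (t - 0) + B * 0)) :=
      (Continuous.tendsto (by continuity) 0)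
    simpa using h.mono_left nhdsWithin_le_nhds
  have hinv : Tendsto (fun s : ℝ => (Real.sqrt t * Real.sqrt s * Real.sqrt (t - s))⁻¹)
      (𝓝[>] 0) atTop := (den_tendsto_zero_left ht).inv_tendsto_nhdsGT_zero
  have h0 := hnum.pos_mul_atTop (by nlinarith : (0:ℝ) < A * t) hinv
  apply h0.congr'
  filter_upwards [Ioo_mem_nhdsGT ht] with s hs
  rw [gg_add_kk_eq ht hs.1 hs.2, div_eq_mul_inv]

lemma gg_zero_eq {B t s : ℝ} (ht : 0 < t) (hs : 0 < s) (hst : s < t) :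
    gg 0 B t s = -(B * Real.sqrt s) / (Real.sqrt t * Real.sqrt (t - s)) := by
  have hts : 0 < t - s := sub_pos.2 hst
  unfold gg
  set a1 := Real.sqrt s with ha1d
  have ha1 : a1 ^ 2 = s := Real.sq_sqrt hs.le
  have hn1 : a1 ≠ 0 := (Real.sqrt_pos.2 hs).ne'
  have hn2 : Real.sqrt (t - s) ≠ 0 := (Real.sqrt_pos.2 hts).ne'
  have hn3 : Real.sqrt t ≠ 0 := (Real.sqrt_pos.2 ht).ne'
  rw [show s = a1 ^ 2 from ha1.symm]
  have hp2 : (0:ℝ) < Real.sqrt (t - a1 ^ 2) := by rw [ha1]; exact Real.sqrt_pos.2 hts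
  have hp1 : (0:ℝ) < Real.sqrt t := Real.sqrt_pos.2 ht
  have hp0 : (0:ℝ) < a1 := Real.sqrt_pos.2 hs
  rw [div_eq_div_iff (by positivity) (by positivity)]
  ring

lemma hh_zero_eq {B t s : ℝ} (ht : 0 < t) (hs : 0 < s) (hst : s < t) :
    gg 0 B t s + kk B t s = B * Real.sqrt s / (Real.sqrt t * Real.sqrt (t - s)) := by
  have hts : 0 < t - s := sub_pos.2 hst
  rw [gg_add_kk_eq ht hs hst]
  set a1 := Real.sqrt s with ha1d
  have ha1 : a1 ^ 2 = s := Real.sq_sqrt hs.le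
  have hn1 : a1 ≠ 0 := (Real.sqrt_pos.2 hs).ne'
  have hn2 : Real.sqrt (t - s) ≠ 0 := (Real.sqrt_pos.2 hts).ne'
  have hn3 : Real.sqrt t ≠ 0 := (Real.sqrt_pos.2 ht).ne'
  rw [show s = a1 ^ 2 from ha1.symm]
  have hp2 : (0:ℝ) < Real.sqrt (t - a1 ^ 2) := by rw [ha1]; exact Real.sqrt_pos.2 hts
  have hp1 : (0:ℝ) < Real.sqrt t := Real.sqrt_pos.2 ht
  have hp0 : (0:ℝ) < a1 := Real.sqrt_pos.2 hs
  rw [div_eq_div_iff (by positivity) (by positivity)]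
  ring

lemma gg_zero_tendsto_left {B t : ℝ} (ht : 0 < t) :
    Tendsto (gg 0 B t) (𝓝[>] 0) (𝓝 0) := by
  have h : Tendsto (fun s : ℝ => -(B * Real.sqrt s) / (Real.sqrt t * Real.sqrt (t - s)))
      (𝓝[>] 0) (𝓝 (-(B * Real.sqrt 0) / (Real.sqrt t * Real.sqrt (t - 0)))) := by
    apply Tendsto.mono_left _ nhdsWithin_le_nhds
    apply Tendsto.div (Continuous.tendsto (by continuity) 0) (Continuous.tendsto (by continuity) 0)
    simp only [sub_zero]
    exact (mul_pos (Real.sqrt_pos.2 ht) (Real.sqrt_pos.2 ht)).ne'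
  simp only [Real.sqrt_zero, mul_zero, neg_zero, zero_div] at h
  apply h.congr'
  filter_upwards [Ioo_mem_nhdsGT ht] with s hs
  rw [gg_zero_eq ht hs.1 hs.2]

lemma hh_zero_tendsto_left {B t : ℝ} (ht : 0 < t) :
    Tendsto (fun s => gg 0 B t s + kk B t s) (𝓝[>] 0) (𝓝 0) := by
  have h : Tendsto (fun s : ℝ => B * Real.sqrt s / (Real.sqrt t * Real.sqrt (t - s)))
      (𝓝[>] 0) (𝓝 (B * Real.sqrt 0 / (Real.sqrt t * Real.sqrt (t - 0)))) := by
    apply Tendsto.mono_left _ nhdsWithin_le_nhds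
    apply Tendsto.div (Continuous.tendsto (by continuity) 0) (Continuous.tendsto (by continuity) 0)
    simp only [sub_zero]
    exact (mul_pos (Real.sqrt_pos.2 ht) (Real.sqrt_pos.2 ht)).ne'
  simp only [Real.sqrt_zero, mul_zero, zero_div] at h
  apply h.congr'
  filter_upwards [Ioo_mem_nhdsGT ht] with s hs
  rw [hh_zero_eq ht hs.1 hs.2]

lemma integral_DD {A B t : ℝ} (hA : 0 ≤ A) (hB : 0 < B) (ht : 0 < t) :
    ∫ s in Ioo (0:ℝ) t, DD A B t s = Real.sqrt (2 * π) := by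
  have hderiv : ∀ s ∈ Ioo (0:ℝ) t, HasDerivAt (FF A B t) (DD A B t s) s :=
    fun s hs => hasDerivAt_FF ht hs.1 hs.2
  have hcont : ContinuousOn (DD A B t) (Ioo (0:ℝ) t) := by
    intro s hs
    obtain ⟨hs0, hst⟩ := hs
    have hts : 0 < t - s := sub_pos.2 hst
    apply ContinuousAt.continuousWithinAt
    have hgc : ContinuousAt (gg A B t) s := by
      apply ContinuousAt.div (Continuous.continuousAt (by continuity)) den_cont.continuousAt
      exact (mul_pos (mul_pos (Real.sqrt_pos.2 ht) (Real.sqrt_pos.2 hs0))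
        (Real.sqrt_pos.2 hts)).ne'
    have h1 : ContinuousAt (fun s => Real.exp (-(gg A B t s) ^ 2 / 2)) s :=
      Real.continuous_exp.continuousAt.comp (((hgc.pow 2).neg).div_const 2)
    have h2 : ContinuousAt (fun s : ℝ => B * Real.sqrt t / (Real.sqrt s * (t - s) ^ ((3:ℝ)/2))) s := by
      apply ContinuousAt.div continuousAt_const
      · exact (Real.continuous_sqrt.continuousAt).mul
          (ContinuousAt.rpow_const ((continuous_const.sub continuous_id).continuousAt)
            (Or.inr (by norm_num)))
      · exact (mul_pos (Real.sqrt_pos.2 hs0) (Real.rpow_pos_of_pos hts _)).ne'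
    exact h1.mul h2
  have hnonneg : ∀ s ∈ Ioo (0:ℝ) t, 0 ≤ DD A B t s := by
    intro s hs
    have hts : 0 < t - s := sub_pos.2 hs.2
    exact mul_nonneg (Real.exp_pos _).le (div_nonneg (mul_nonneg hB.le (Real.sqrt_nonneg t))
      (mul_nonneg (Real.sqrt_nonneg s) (Real.rpow_nonneg hts.le _)))
  have hbt : Tendsto (FF A B t) (𝓝[<] t)
      (𝓝 (Real.exp (2 * A * B / t) * Real.sqrt (2 * π) - 0)) := by
    apply Tendsto.sub
    · exact (gaussG_atTop.comp (hh_tendsto_atTop_right hA hB ht)).const_mul _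
    · exact gaussG_atBot.comp (gg_tendsto_atBot hB ht)
  rcases eq_or_lt_of_le hA with hA0 | hA0
  · -- A = 0
    subst hA0
    have hat : Tendsto (FF 0 B t) (𝓝[>] (0:ℝ))
        (𝓝 (Real.exp (2 * 0 * B / t) * gaussG 0 - gaussG 0)) := by
      apply Tendsto.sub
      · exact (((gaussG_hasDerivAt 0).continuousAt.tendsto).comp
          (hh_zero_tendsto_left ht)).const_mul _
      · exact ((gaussG_hasDerivAt 0).continuousAt.tendsto).comp (gg_zero_tendsto_left ht)
    have h0 : Real.exp (2 * 0 * B / t) * gaussG 0 - gaussG 0 = 0 := by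
      norm_num
    rw [h0] at hat
    rw [my_integral_Ioo ht hderiv hcont hnonneg hat hbt]
    norm_num
  · -- 0 < A
    have hat : Tendsto (FF A B t) (𝓝[>] (0:ℝ))
        (𝓝 (Real.exp (2 * A * B / t) * Real.sqrt (2 * π) - Real.sqrt (2 * π))) := by
      apply Tendsto.sub
      · exact (gaussG_atTop.comp (hh_tendsto_atTop_left hA0 hB ht)).const_mul _
      · exact gaussG_atTop.comp (gg_tendsto_atTop_left hA0 hB ht)
    rw [my_integral_Ioo ht hderiv hcont hnonneg hat hbt]
    ring

lemma gg_sq {A B t s : ℝ} (ht : 0 < t) (hs : 0 < s) (hst : s < t) :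
    gg A B t s ^ 2 = A ^ 2 / s + B ^ 2 / (t - s) - (A + B) ^ 2 / t := by
  have hts : 0 < t - s := sub_pos.2 hst
  unfold gg
  rw [div_pow, mul_pow, mul_pow, Real.sq_sqrt ht.le, Real.sq_sqrt hs.le, Real.sq_sqrt hts.le]
  field_simp
  ring

/-- Convolution identity between the Gaussian heat kernel and the one-sided stable-1/2
density: `∫_0^t p_s(x) q_{|y|}(t-s) ds = p_t(|x|+|y|)`. -/
theorem heatKernel_conv_hittingDensity (x y t : ℝ) (hy : y ≠ 0) (ht : 0 < t) :
    ∫ s in Set.Ioo (0 : ℝ) t,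
        (1 / Real.sqrt (2 * Real.pi * s) * Real.exp (-x ^ 2 / (2 * s))) *
          (|y| / (Real.sqrt (2 * Real.pi) * (t - s) ^ ((3 : ℝ) / 2)) *
            Real.exp (-y ^ 2 / (2 * (t - s))))
      = 1 / Real.sqrt (2 * Real.pi * t) * Real.exp (-(|x| + |y|) ^ 2 / (2 * t)) := by
  set A := |x| with hAd
  set B := |y| with hBd
  have hA : 0 ≤ A := abs_nonneg x
  have hB : 0 < B := abs_pos.2 hy
  set W := Real.sqrt (2 * π) with hWd
  have hW : W * W = 2 * π := Real.mul_self_sqrt (by positivity)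
  have hW0 : W ≠ 0 := by rw [hWd]; positivity
  have ht0 : Real.sqrt t ≠ 0 := (Real.sqrt_pos.2 ht).ne'
  set c : ℝ := Real.exp (-(A + B) ^ 2 / (2 * t)) / (2 * π * Real.sqrt t) with hcd
  have hee : Real.exp (-(A + B) ^ 2 / (2 * t)) * Real.exp ((A + B) ^ 2 / (2 * t)) = 1 := by
    rw [← Real.exp_add]
    rw [show -(A + B) ^ 2 / (2 * t) + (A + B) ^ 2 / (2 * t) = 0 by ring]
    exact Real.exp_zero
  have hptw : ∀ s ∈ Ioo (0:ℝ) t,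
      (1 / Real.sqrt (2 * Real.pi * s) * Real.exp (-x ^ 2 / (2 * s))) *
        (B / (W * (t - s) ^ ((3 : ℝ) / 2)) *
          Real.exp (-y ^ 2 / (2 * (t - s)))) = c * DD A B t s := by
    intro s hs
    obtain ⟨hs0, hst⟩ := hs
    have hts : 0 < t - s := sub_pos.2 hst
    have hgg : Real.exp (-(gg A B t s) ^ 2 / 2)
        = Real.exp ((A + B) ^ 2 / (2 * t)) *
          (Real.exp (-x ^ 2 / (2 * s)) * Real.exp (-y ^ 2 / (2 * (t - s)))) := by
      rw [← Real.exp_add, ← Real.exp_add]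
      congr 1
      rw [gg_sq ht hs0 hst, show A ^ 2 = x ^ 2 from sq_abs x, show B ^ 2 = y ^ 2 from sq_abs y]
      field_simp
      ring
    have hs0' : Real.sqrt s ≠ 0 := (Real.sqrt_pos.2 hs0).ne'
    have hr0 : (t - s) ^ ((3:ℝ)/2) ≠ 0 := (Real.rpow_pos_of_pos hts _).ne'
    have step1 : c * DD A B t s
        = (Real.exp (-(A + B) ^ 2 / (2 * t)) * Real.exp ((A + B) ^ 2 / (2 * t)))
          * (Real.exp (-x ^ 2 / (2 * s)) * Real.exp (-y ^ 2 / (2 * (t - s))))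
          * (B * Real.sqrt t)
          / (2 * π * Real.sqrt t * Real.sqrt s * (t - s) ^ ((3:ℝ)/2)) := by
      rw [hcd]
      unfold DD
      rw [hgg]
      ring
    rw [step1, hee, Real.sqrt_mul (by positivity : (0:ℝ) ≤ 2 * π) s, ← hWd, ← hW]
    field_simp
  rw [MeasureTheory.setIntegral_congr_fun measurableSet_Ioo hptw,
    MeasureTheory.integral_const_mul, integral_DD hA hB ht]
  rw [hcd, Real.sqrt_mul (by positivity : (0:ℝ) ≤ 2 * π) t, ← hWd, ← hW]
  field_simp
end
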